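/- arXiv:1604.03752 — 8 statements merged into one kernel-verified Lean document; each statement's English description precedes it below -/
import Mathlib

section
/- Let M be a nonnegative integer and let f : ℝ → ℝ be (M+1)-times continuously differentiable on [0,1]. Then the limit as L → ∞ (L a positive integer) of Σ_{ℓ=1}^{L} Σ_{m=0}^{M} ((−1)^m + 1)/((2L)^{m+1} (m+1)!) · f^{(m)}((2ℓ−1)/(2L)) equals ∫_0^1 f(t) dt. -/
/-!
The `m = 0` term is `L⁻¹ ∑ f(midpoint)`, a Riemann sum of `f`, which tends to `∫₀¹ f` by uniform
continuity. For `m ≥ 1` the coefficient is `O(L^{-(m+1)}) = O(L⁻²)` while `f^{(m)}` is bounded on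
`(0, 1)`, so the sum over the `L` cells is `O(L⁻¹)`.
-/

open Filter Set Topology MeasureTheory

noncomputable def cellMidpoint (L ℓ : ℕ) : ℝ := (2 * ℓ - 1) / (2 * L)

lemma cellMidpoint_mem_Icc {L ℓ : ℕ} (hL : L ≠ 0) :
    cellMidpoint L ℓ ∈ Icc (((ℓ : ℝ) - 1) / L) (ℓ / L) := by
  have hLpos : (0 : ℝ) < L := by positivity
  constructor <;> rw [cellMidpoint, div_le_div_iff₀ (by positivity) (by positivity)] <;> nlinarith

lemma Icc_cell_subset_Icc_zero_one {L ℓ : ℕ} (hℓ : ℓ ∈ Finset.Icc 1 L) :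
    Icc (((ℓ : ℝ) - 1) / L) (ℓ / L) ⊆ Icc 0 1 := by
  obtain ⟨h1, hL⟩ := Finset.mem_Icc.mp hℓ
  have h1 : (1 : ℝ) ≤ ℓ := by exact_mod_cast h1
  have hL : (ℓ : ℝ) ≤ L := by exact_mod_cast hL
  exact Icc_subset_Icc (div_nonneg (by linarith) (by linarith)) (div_le_one_of_le₀ hL (by linarith))

lemma cellMidpoint_mem_Ioo {L ℓ : ℕ} (hℓ : ℓ ∈ Finset.Icc 1 L) : cellMidpoint L ℓ ∈ Ioo 0 1 := by
  obtain ⟨h1, hL⟩ := Finset.mem_Icc.mp hℓ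
  have h1 : (1 : ℝ) ≤ ℓ := by exact_mod_cast h1
  have hL : (ℓ : ℝ) ≤ L := by exact_mod_cast hL
  constructor
  · unfold cellMidpoint; apply div_pos <;> linarith
  · rw [cellMidpoint, div_lt_one (by linarith)]; linarith

lemma integral_zero_one_eq_sum_cells {f : ℝ → ℝ} (hf : IntervalIntegrable f volume 0 1)
    {L : ℕ} (hL : L ≠ 0) :
    ∫ t in (0 : ℝ)..1, f t = ∑ ℓ ∈ Finset.Icc 1 L, ∫ t in ((ℓ : ℝ) - 1) / L..ℓ / L, f t := by
  have hL : (L : ℝ) ≠ 0 := by exact_mod_cast hL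
  have key := intervalIntegral.sum_integral_adjacent_intervals_Ico (μ := volume)
    (f := f) (a := fun k : ℕ => ((k : ℝ) - 1) / L) (m := 1) (n := L + 1) (by omega) fun k hk => by
      refine hf.mono_set ?_
      simp only [Nat.cast_add, Nat.cast_one, add_sub_cancel_right]
      rw [uIcc_of_le zero_le_one, uIcc_of_le (by gcongr; linarith)]
      exact Icc_cell_subset_Icc_zero_one (Finset.mem_Icc.mpr ⟨hk.1, Nat.lt_succ_iff.mp hk.2⟩)
  simp only [Nat.cast_add, Nat.cast_one, add_sub_cancel_right, sub_self, zero_div,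
    div_self hL] at key
  rw [← key, Finset.Ico_add_one_right_eq_Icc]

lemma abs_integral_sub_mul_le {f : ℝ → ℝ} {a b c ε : ℝ} (hab : a ≤ b)
    (hf : IntervalIntegrable f volume a b) (h : ∀ t ∈ Icc a b, |f t - c| ≤ ε) :
    |(∫ t in a..b, f t) - (b - a) * c| ≤ ε * (b - a) := by
  have hsub : (∫ t in a..b, f t) - (b - a) * c = ∫ t in a..b, (f t - c) := by
    rw [intervalIntegral.integral_sub hf intervalIntegrable_const, intervalIntegral.integral_const,
      smul_eq_mul]
  rw [hsub, ← Real.norm_eq_abs, ← abs_of_nonneg (sub_nonneg.mpr hab)]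
  refine intervalIntegral.norm_integral_le_of_norm_le_const fun t ht => h t ?_
  rw [uIoc_of_le hab] at ht
  exact Ioc_subset_Icc_self ht

theorem tendsto_inv_mul_sum_cellMidpoint {f : ℝ → ℝ} (hf : ContinuousOn f (Icc 0 1)) :
    Tendsto (fun L : ℕ => (L : ℝ)⁻¹ * ∑ ℓ ∈ Finset.Icc 1 L, f (cellMidpoint L ℓ)) atTop
      (𝓝 (∫ t in (0 : ℝ)..1, f t)) := by
  rw [Metric.tendsto_atTop]
  intro ε hε
  obtain ⟨δ, hδ, hfδ⟩ := Metric.uniformContinuousOn_iff_le.mp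
    (isCompact_Icc.uniformContinuousOn_of_continuous hf) (ε / 2) (half_pos hε)
  obtain ⟨N, hN⟩ := exists_nat_gt δ⁻¹
  refine ⟨N + 1, fun L hL => ?_⟩
  have hL0 : L ≠ 0 := by omega
  have hLpos : (0 : ℝ) < L := by positivity
  have hmesh : (L : ℝ)⁻¹ ≤ δ :=
    inv_le_of_inv_le₀ hδ (hN.trans_le (by exact_mod_cast (Nat.le_succ N).trans hL)).le
  have hcell : ∀ ℓ ∈ Finset.Icc 1 L,
      |(∫ t in ((ℓ : ℝ) - 1) / L..ℓ / L, f t) - (L : ℝ)⁻¹ * f (cellMidpoint L ℓ)|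
        ≤ ε / 2 * (L : ℝ)⁻¹ := by
    intro ℓ hℓ
    have hwidth : (ℓ : ℝ) / L - (ℓ - 1) / L = (L : ℝ)⁻¹ := by field_simp; ring
    have hcell := Icc_cell_subset_Icc_zero_one hℓ
    have hmid := cellMidpoint_mem_Icc (ℓ := ℓ) hL0
    rw [← hwidth]
    refine abs_integral_sub_mul_le (by linarith [inv_pos.mpr hLpos])
      ((hf.mono hcell).intervalIntegrable_of_Icc (by linarith [inv_pos.mpr hLpos])) fun t ht => ?_
    rw [← Real.dist_eq]
    refine hfδ t (hcell ht) _ (hcell hmid) ?_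
    exact (Real.dist_le_of_mem_Icc ht hmid).trans (hwidth ▸ hmesh)
  rw [dist_comm, Real.dist_eq,
    integral_zero_one_eq_sum_cells (hf.intervalIntegrable_of_Icc zero_le_one) hL0,
    Finset.mul_sum, ← Finset.sum_sub_distrib]
  calc _ ≤ ∑ ℓ ∈ Finset.Icc 1 L, ε / 2 * (L : ℝ)⁻¹ :=
        (Finset.abs_sum_le_sum_abs _ _).trans (Finset.sum_le_sum hcell)
    _ = ε / 2 := by
      rw [Finset.sum_const, Nat.card_Icc, add_tsub_cancel_right, nsmul_eq_mul]; field_simp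
    _ < ε := half_lt_self hε

lemma ContDiffOn.exists_norm_iteratedDeriv_le {F : Type*} [NormedAddCommGroup F]
    [NormedSpace ℝ F] {f : ℝ → F} {a b : ℝ} {n m : ℕ} (hf : ContDiffOn ℝ n f (Icc a b))
    (hm : m ≤ n) : ∃ C, ∀ x ∈ Ioo a b, ‖iteratedDeriv m f x‖ ≤ C := by
  rcases lt_or_ge a b with hab | hba
  · obtain ⟨C, hC⟩ := isCompact_Icc.exists_bound_of_continuousOn
      (hf.continuousOn_iteratedDerivWithin (by exact_mod_cast hm) (uniqueDiffOn_Icc hab))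
    refine ⟨C, fun x hx => ?_⟩
    have hfx : ContDiffAt ℝ m f x :=
      (hf.contDiffAt (Icc_mem_nhds hx.1 hx.2)).of_le (by exact_mod_cast hm)
    rw [← iteratedDerivWithin_eq_iteratedDeriv (uniqueDiffOn_Icc hab) hfx (Ioo_subset_Icc_self hx)]
    exact hC x (Ioo_subset_Icc_self hx)
  · exact ⟨0, by simp [Ioo_eq_empty_of_le hba]⟩

lemma norm_sum_cellMidpoint_le {F : Type*} [NormedAddCommGroup F] {g : ℝ → F} {C : ℝ}
    (hg : ∀ x ∈ Ioo 0 1, ‖g x‖ ≤ C) (L : ℕ) :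
    ‖∑ ℓ ∈ Finset.Icc 1 L, g (cellMidpoint L ℓ)‖ ≤ C * L := by
  calc _ ≤ ∑ ℓ ∈ Finset.Icc 1 L, C :=
        (norm_sum_le _ _).trans (Finset.sum_le_sum fun ℓ hℓ => hg _ (cellMidpoint_mem_Ioo hℓ))
    _ = C * L := by
      rw [Finset.sum_const, Nat.card_Icc, add_tsub_cancel_right, nsmul_eq_mul, mul_comm]

lemma tendsto_div_pow_mul_zero_of_norm_le {S : ℕ → ℝ} {C : ℝ} (c : ℝ) {k : ℕ} (hk : 2 ≤ k)
    (hS : ∀ L, ‖S L‖ ≤ C * L) : Tendsto (fun L : ℕ => c / (L : ℝ) ^ k * S L) atTop (𝓝 0) := by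
  refine squeeze_zero_norm' ?_ (tendsto_const_div_atTop_nhds_zero_nat (|c| * C))
  filter_upwards [eventually_ge_atTop 1] with L hL
  have hL : (1 : ℝ) ≤ L := by exact_mod_cast hL
  calc ‖c / (L : ℝ) ^ k * S L‖ = |c| / (L : ℝ) ^ k * ‖S L‖ := by
        rw [norm_mul, norm_div, norm_pow, Real.norm_eq_abs, Real.norm_natCast]
    _ ≤ |c| / (L : ℝ) ^ 2 * (C * L) := by
        gcongr
        exact hS L
    _ = |c| * C / L := by field_simp

theorem enhanced_midpoint_tendsto
    (M : ℕ) (f : ℝ → ℝ)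
    (hf : ContDiffOn ℝ (M + 1 : ℕ) f (Set.Icc 0 1)) :
    Tendsto
      (fun L : ℕ =>
        ∑ ℓ ∈ Finset.Icc 1 L, ∑ m ∈ Finset.range (M + 1),
          (((-1 : ℝ) ^ m + 1) / ((2 * L : ℝ) ^ (m + 1) * ((m + 1).factorial : ℝ))) *
            iteratedDeriv m f ((2 * (ℓ : ℝ) - 1) / (2 * L)))
      atTop (nhds (∫ t in (0:ℝ)..1, f t)) := by
  have hterm : ∀ m ∈ Finset.range (M + 1), Tendsto (fun L : ℕ =>
      ((-1 : ℝ) ^ m + 1) / ((2 * L : ℝ) ^ (m + 1) * ((m + 1).factorial : ℝ)) *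
        ∑ ℓ ∈ Finset.Icc 1 L, iteratedDeriv m f (cellMidpoint L ℓ))
      atTop (𝓝 (if m = 0 then ∫ t in (0 : ℝ)..1, f t else 0)) := by
    rintro (_ | m) hm
    · rw [if_pos rfl]
      refine (tendsto_inv_mul_sum_cellMidpoint hf.continuousOn).congr fun L => ?_
      rw [iteratedDeriv_zero]
      congr 1
      norm_num
      ring
    · rw [if_neg m.succ_ne_zero]
      obtain ⟨C, hC⟩ := hf.exists_norm_iteratedDeriv_le (Finset.mem_range.mp hm).le
      refine (tendsto_div_pow_mul_zero_of_norm_le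
        (((-1 : ℝ) ^ (m + 1) + 1) / (2 ^ (m + 1 + 1) * ((m + 1 + 1).factorial : ℝ)))
        (k := m + 1 + 1) (by omega) (norm_sum_cellMidpoint_le hC)).congr fun L => ?_
      congr 1
      ring
  have hsum := tendsto_finsetSum _ hterm
  rw [Finset.sum_ite_eq', if_pos (Finset.mem_range.mpr M.succ_pos)] at hsum
  refine hsum.congr fun L => ?_
  simp only [Finset.mul_sum]
  exact Finset.sum_comm
end

section
/- For every real number x and every nonnegative integer M, arctan(x) equals the limit as L → ∞ (L a positive integer) of Σ_{ℓ=1}^{L} Σ_{m=0}^{M} ((−1)^m + 1)/((2L)^{m+1} (m+1)!) · (d^m/dt^m)[x/(1 + x²t²)] evaluated at t = (2ℓ−1)/(2L). -/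
/-!
With `f t = x / (1 + x²t²)` and `Q_L(g) = L⁻¹ ∑ₗ g((2ℓ-1)/(2L))` the midpoint rule on `[0, 1]`, the
`m`-th inner sum is `cₘ · L⁻ᵐ · Q_L(f⁽ᵐ⁾)` for a constant `cₘ` with `c₀ = 1`. By uniform continuity
`Q_L(g) → ∫₀¹ g` for continuous `g`, so the `m`-th term tends to `cₘ · 0ᵐ · ∫₀¹ f⁽ᵐ⁾`: only `m = 0`
survives, and `∫₀¹ x / (1 + x²t²) dt = arctan x` by the substitution `u = xt`.
-/

open Filter Topology MeasureTheory

noncomputable def midpointRule (f : ℝ → ℝ) (L : ℕ) : ℝ :=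
  (L : ℝ)⁻¹ * ∑ ℓ ∈ Finset.Icc 1 L, f ((2 * ℓ - 1) / (2 * L))

lemma midpointRule_eq_sum_range (f : ℝ → ℝ) (L : ℕ) :
    midpointRule f L = ∑ k ∈ Finset.range L,
      (((k + 1 : ℝ) / L - k / L) * f ((k / L + (k + 1) / L) / 2)) := by
  rw [midpointRule, Finset.mul_sum, ← Finset.Ico_add_one_right_eq_Icc,
    Finset.sum_Ico_eq_sum_range, add_tsub_cancel_right]
  refine Finset.sum_congr rfl fun k _ => ?_
  push_cast
  ring_nf

lemma abs_mul_sub_integral_le {f : ℝ → ℝ} {a b c ε : ℝ} (hab : a ≤ b)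
    (hf : IntervalIntegrable f volume a b) (h : ∀ t ∈ Set.Icc a b, |f c - f t| ≤ ε) :
    |(b - a) * f c - ∫ t in a..b, f t| ≤ ε * (b - a) := by
  have hconst : (b - a) * f c = ∫ _ in a..b, f c := by simp
  rw [hconst, ← intervalIntegral.integral_sub intervalIntegrable_const hf,
    ← abs_of_nonneg (sub_nonneg.2 hab)]
  refine intervalIntegral.norm_integral_le_of_norm_le_const (f := fun t => f c - f t)
    fun t ht => h t ?_
  rw [← Set.uIcc_of_le hab]
  exact Set.uIoc_subset_uIcc ht

lemma abs_mul_midpoint_sub_integral_le {f : ℝ → ℝ} {a b δ ε : ℝ} (hab : a ≤ b)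
    (hba : b - a < δ) (hf : ContinuousOn f (Set.Icc a b))
    (hfδ : ∀ s ∈ Set.Icc a b, ∀ t ∈ Set.Icc a b, dist s t < δ → dist (f s) (f t) < ε) :
    |(b - a) * f ((a + b) / 2) - ∫ t in a..b, f t| ≤ ε * (b - a) := by
  refine abs_mul_sub_integral_le hab (hf.intervalIntegrable_of_Icc hab) fun t ht => ?_
  have hc : (a + b) / 2 ∈ Set.Icc a b := ⟨by linarith, by linarith⟩
  have hct : dist ((a + b) / 2) t < δ := by
    rw [Real.dist_eq, abs_lt]
    constructor <;> linarith [ht.1, ht.2]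
  exact (hfδ _ hc t ht hct).le

lemma Icc_div_subset_Icc_zero_one {k L : ℕ} (hk : k < L) :
    Set.Icc ((k : ℝ) / L) ((k + 1) / L) ⊆ Set.Icc 0 1 := by
  have hL : (0 : ℝ) < L := Nat.cast_pos.2 (by omega)
  have : (k + 1 : ℝ) ≤ L := by exact_mod_cast hk
  exact Set.Icc_subset_Icc (by positivity) ((div_le_one hL).2 this)

lemma integral_eq_sum_integral_div {f : ℝ → ℝ} (hf : ContinuousOn f (Set.Icc 0 1)) {L : ℕ}
    (hL : L ≠ 0) :
    ∫ t in (0 : ℝ)..1, f t = ∑ k ∈ Finset.range L, ∫ t in (k / L : ℝ)..(k + 1) / L, f t := by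
  have := intervalIntegral.sum_integral_adjacent_intervals (a := fun k : ℕ => (k : ℝ) / L)
    (μ := volume) (f := f) (n := L) fun k hk => (hf.mono ?_).intervalIntegrable
  · push_cast at this
    rw [this, zero_div, div_self (Nat.cast_ne_zero.2 hL)]
  · rw [Set.uIcc_of_le (by gcongr; simp)]
    push_cast
    exact Icc_div_subset_Icc_zero_one hk

theorem tendsto_midpointRule {f : ℝ → ℝ} (hf : ContinuousOn f (Set.Icc 0 1)) :
    Tendsto (midpointRule f) atTop (𝓝 (∫ t in (0 : ℝ)..1, f t)) := by
  rw [Metric.tendsto_atTop]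
  intro ε hε
  obtain ⟨δ, hδ, hfδ⟩ := Metric.uniformContinuousOn_iff.1
    (isCompact_Icc.uniformContinuousOn_of_continuous hf) (ε / 2) (half_pos hε)
  obtain ⟨N, hN⟩ := exists_nat_one_div_lt hδ
  refine ⟨N + 1, fun L hNL => ?_⟩
  have hL0 : L ≠ 0 := by omega
  have hL : (0 : ℝ) < L := by positivity
  have hwidth (k : ℕ) : (k + 1 : ℝ) / L - k / L = 1 / L := by field_simp; ring
  have hcell : ∀ k ∈ Finset.range L, |((k + 1 : ℝ) / L - k / L) * f ((k / L + (k + 1) / L) / 2)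
      - ∫ t in (k / L : ℝ)..(k + 1) / L, f t| ≤ ε / 2 * ((k + 1 : ℝ) / L - k / L) := by
    intro k hk
    have hsub := Icc_div_subset_Icc_zero_one (Finset.mem_range.1 hk)
    have hδ' : (k + 1 : ℝ) / L - k / L < δ :=
      hwidth k ▸ (one_div_le_one_div_of_le (by positivity) (by exact_mod_cast hNL)).trans_lt hN
    exact abs_mul_midpoint_sub_integral_le (by linarith [hwidth k, one_div_pos.2 hL]) hδ'
      (hf.mono hsub) fun s hs t ht => hfδ s (hsub hs) t (hsub ht)
  calc dist (midpointRule f L) (∫ t in (0 : ℝ)..1, f t)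
      ≤ ∑ k ∈ Finset.range L, ε / 2 * ((k + 1 : ℝ) / L - k / L) := by
        rw [Real.dist_eq, integral_eq_sum_integral_div hf hL0, midpointRule_eq_sum_range,
          ← Finset.sum_sub_distrib]
        exact (Finset.abs_sum_le_sum_abs _ _).trans (Finset.sum_le_sum hcell)
    _ = ε / 2 := by
        simp only [hwidth, Finset.sum_const, Finset.card_range, nsmul_eq_mul]
        field_simp
    _ < ε := half_lt_self hε

lemma integral_div_one_add_sq_mul_sq (x : ℝ) :
    ∫ t in (0 : ℝ)..1, x / (1 + x ^ 2 * t ^ 2) = Real.arctan x := by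
  have := intervalIntegral.mul_integral_comp_mul_left (a := 0) (b := 1)
    (f := fun u : ℝ => 1 / (1 + u ^ 2)) x
  simp only [mul_zero, mul_one, integral_one_div_one_add_sq, Real.arctan_zero, sub_zero] at this
  rw [← this, ← intervalIntegral.integral_const_mul]
  congr 1 with t
  rw [mul_pow]
  field_simp

lemma sum_Icc_div_two_mul_pow_mul (g : ℝ → ℝ) (a b : ℝ) (m L : ℕ) :
    ∑ ℓ ∈ Finset.Icc 1 L, a / ((2 * L : ℝ) ^ (m + 1) * b) * g ((2 * ℓ - 1) / (2 * L)) =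
      a / (2 ^ (m + 1) * b) * (L : ℝ)⁻¹ ^ m * midpointRule g L := by
  rw [midpointRule, Finset.mul_sum, Finset.mul_sum]
  refine Finset.sum_congr rfl fun ℓ _ => ?_
  ring

theorem arctan_enhanced_midpoint_tendsto (x : ℝ) (M : ℕ) :
    Tendsto
      (fun L : ℕ =>
        ∑ ℓ ∈ Finset.Icc 1 L, ∑ m ∈ Finset.range (M + 1),
          (((-1 : ℝ) ^ m + 1) / ((2 * L : ℝ) ^ (m + 1) * ((m + 1).factorial : ℝ))) *
            iteratedDeriv m (fun t : ℝ => x / (1 + x ^ 2 * t ^ 2))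
              ((2 * (ℓ : ℝ) - 1) / (2 * L)))
      atTop (nhds (Real.arctan x)) := by
  set f := fun t : ℝ => x / (1 + x ^ 2 * t ^ 2)
  have hf : ContDiff ℝ ⊤ f := contDiff_const.div (by fun_prop) fun t => by positivity
  have hinv : Tendsto (fun L : ℕ => (L : ℝ)⁻¹) atTop (𝓝 0) :=
    tendsto_inv_atTop_zero.comp tendsto_natCast_atTop_atTop
  simp_rw [Finset.sum_comm (s := Finset.Icc 1 _), sum_Icc_div_two_mul_pow_mul]
  convert tendsto_finsetSum (Finset.range (M + 1)) fun m _ =>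
    (tendsto_const_nhds.mul (hinv.pow m)).mul
      (tendsto_midpointRule (hf.continuous_iteratedDeriv m le_top).continuousOn)
  rw [Finset.sum_range_succ']
  simp [f, integral_div_one_add_sq_mul_sq]
end

section
/- For every real number x, arctan(x) equals the limit as L → ∞ (L a positive integer) of Σ_{ℓ=1}^{L} [ 4Lx / (4L² + (2ℓ−1)² x²) − 4Lx³ (4L² − 3(2ℓ−1)² x²) / (3 (4L² + (2ℓ−1)² x²)³) ]. -/
/-!
Put `f t = x / (1 + (t * x) ^ 2)`, so that `∫₀¹ f = arctan x`, and `h = 1 / L`. The `ℓ`-th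
summand is `h f(mₗ) + h³ f''(mₗ) / 24` at the midpoint `mₗ = (ℓ - 1/2) h`: the midpoint rule
plus its leading Euler–Maclaurin correction. Since `f` is `x²`-Lipschitz, the midpoint sums
converge to the integral with error `O(h)`, while the `L` correction terms are each `O(h³)`.
-/

open Filter Finset

noncomputable def midpointRiemannSum (f : ℝ → ℝ) (a b : ℝ) (n : ℕ) : ℝ :=
  ∑ k ∈ range n, (b - a) / n * f (a + (k + 1 / 2) * ((b - a) / n))

theorem add_mul_mem_uIcc_add_mul {a h s t r : ℝ} (hs : s ≤ r) (ht : r ≤ t) :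
    a + r * h ∈ Set.uIcc (a + s * h) (a + t * h) := by
  rcases le_total 0 h with hh | hh
  · exact Set.mem_uIcc_of_le (by nlinarith) (by nlinarith)
  · exact Set.mem_uIcc_of_ge (by nlinarith) (by nlinarith)

namespace LipschitzWith

variable {f : ℝ → ℝ} {K : NNReal}

theorem abs_integral_sub_mul_le (hf : LipschitzWith K f) {a b c : ℝ} (hc : c ∈ Set.uIcc a b) :
    |(∫ t in a..b, f t) - (b - a) * f c| ≤ K * (b - a) ^ 2 := by
  have hbound : ∀ t ∈ Set.uIoc a b, ‖f t - f c‖ ≤ K * |b - a| := fun t ht => by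
    calc ‖f t - f c‖ = dist (f t) (f c) := rfl
      _ ≤ K * dist t c := hf.dist_le_mul t c
      _ ≤ K * |b - a| := by
        gcongr
        exact Set.abs_sub_le_of_uIcc_subset_uIcc
          (Set.uIcc_subset_uIcc hc (Set.uIoc_subset_uIcc ht))
  have hsub : (∫ t in a..b, f t) - (b - a) * f c = ∫ t in a..b, (f t - f c) := by
    rw [intervalIntegral.integral_sub (hf.continuous.intervalIntegrable a b) intervalIntegrable_const,
      intervalIntegral.integral_const, smul_eq_mul]
  rw [hsub, ← Real.norm_eq_abs, ← sq_abs (b - a), sq, ← mul_assoc]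
  exact intervalIntegral.norm_integral_le_of_norm_le_const hbound

theorem abs_integral_sub_midpointRiemannSum_le (hf : LipschitzWith K f) (a b : ℝ) {n : ℕ}
    (hn : n ≠ 0) : |(∫ t in a..b, f t) - midpointRiemannSum f a b n| ≤ K * (b - a) ^ 2 / n := by
  set h := (b - a) / n
  have hn' : (n : ℝ) ≠ 0 := Nat.cast_ne_zero.mpr hn
  have hsplit : ∫ t in a..b, f t = ∑ k ∈ range n, ∫ t in a + k * h..a + (k + 1 : ℕ) * h, f t := by
    rw [intervalIntegral.sum_integral_adjacent_intervals
      fun k _ => hf.continuous.intervalIntegrable _ _]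
    simp only [h, Nat.cast_zero, zero_mul, add_zero]
    congr
    field_simp
    ring
  have hpiece : ∀ k ∈ range n, |(∫ t in a + k * h..a + (k + 1 : ℕ) * h, f t)
      - h * f (a + (k + 1 / 2) * h)| ≤ K * h ^ 2 := fun k _ => by
    have hmid := add_mul_mem_uIcc_add_mul (a := a) (h := h)
      (by linarith : (k : ℝ) ≤ k + 1 / 2) (by push_cast; linarith : (k : ℝ) + 1 / 2 ≤ (k + 1 : ℕ))
    convert hf.abs_integral_sub_mul_le hmid using 3 <;> push_cast <;> ring
  calc |(∫ t in a..b, f t) - midpointRiemannSum f a b n|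
      ≤ ∑ k ∈ range n, |(∫ t in a + k * h..a + (k + 1 : ℕ) * h, f t)
          - h * f (a + (k + 1 / 2) * h)| := by
        rw [hsplit, midpointRiemannSum, ← sum_sub_distrib]
        exact abs_sum_le_sum_abs _ _
    _ ≤ ∑ k ∈ range n, K * h ^ 2 := sum_le_sum hpiece
    _ = K * (b - a) ^ 2 / n := by
        rw [sum_const, card_range, nsmul_eq_mul, div_pow]
        field_simp

theorem tendsto_midpointRiemannSum (hf : LipschitzWith K f) (a b : ℝ) :
    Tendsto (midpointRiemannSum f a b) atTop (nhds (∫ t in a..b, f t)) := by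
  rw [tendsto_iff_norm_sub_tendsto_zero]
  refine squeeze_zero' (Eventually.of_forall fun n => norm_nonneg _) ?_
    ((tendsto_const_nhds (x := (K : ℝ) * (b - a) ^ 2)).div_atTop tendsto_natCast_atTop_atTop)
  filter_upwards [eventually_ne_atTop 0] with n hn
  rw [norm_sub_rev, Real.norm_eq_abs]
  exact hf.abs_integral_sub_midpointRiemannSum_le a b hn

end LipschitzWith

theorem lipschitzWith_inv_one_add_sq : LipschitzWith 1 fun u : ℝ => (1 + u ^ 2)⁻¹ := by
  refine LipschitzWith.of_dist_le_mul fun u v => ?_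
  have hu : 0 < 1 + u ^ 2 := by positivity
  have hv : 0 < 1 + v ^ 2 := by positivity
  have hsum : |u + v| ≤ (1 + u ^ 2) * (1 + v ^ 2) := by
    have h2u : 2 * |u| ≤ 1 + u ^ 2 := by nlinarith [sq_nonneg (|u| - 1), sq_abs u]
    have h2v : 2 * |v| ≤ 1 + v ^ 2 := by nlinarith [sq_nonneg (|v| - 1), sq_abs v]
    nlinarith [abs_add_le u v, mul_nonneg (sq_nonneg u) (sq_nonneg v)]
  rw [Real.dist_eq, Real.dist_eq, NNReal.coe_one, one_mul, inv_sub_inv hu.ne' hv.ne', abs_div,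
    abs_of_pos (mul_pos hu hv), div_le_iff₀ (mul_pos hu hv)]
  calc |1 + v ^ 2 - (1 + u ^ 2)| = |u - v| * |u + v| := by
        rw [← abs_mul, abs_sub_comm]; congr 1; ring
    _ ≤ |u - v| * ((1 + u ^ 2) * (1 + v ^ 2)) := by gcongr

theorem lipschitzWith_div_one_add_mul_sq (x : ℝ) :
    LipschitzWith (‖x‖₊ ^ 2) fun t : ℝ => x / (1 + (t * x) ^ 2) := by
  have hf : (fun t : ℝ => x / (1 + (t * x) ^ 2)) =
      (x • ·) ∘ (fun u : ℝ => (1 + u ^ 2)⁻¹) ∘ (x • ·) := by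
    ext t
    simp [div_eq_mul_inv, mul_comm]
  have h := (lipschitzWith_smul x).comp (lipschitzWith_inv_one_add_sq.comp (lipschitzWith_smul x))
  rw [one_mul, ← sq] at h
  rwa [hf]

theorem integral_div_one_add_mul_sq (x a b : ℝ) :
    ∫ t in a..b, x / (1 + (t * x) ^ 2) = Real.arctan (b * x) - Real.arctan (a * x) := by
  refine intervalIntegral.integral_eq_sub_of_hasDerivAt (f := fun t => Real.arctan (t * x))
    (fun t _ => ?_) ((lipschitzWith_div_one_add_mul_sq x).continuous.intervalIntegrable a b)
  simpa [div_eq_inv_mul] using (hasDerivAt_mul_const x).arctan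

theorem abs_arctan_midpoint_correction_le (x w : ℝ) {L : ℝ} (hL : 0 < L) :
    |4 * L * x ^ 3 * (4 * L ^ 2 - 3 * w ^ 2 * x ^ 2) / (3 * (4 * L ^ 2 + w ^ 2 * x ^ 2) ^ 3)|
      ≤ |x| ^ 3 / (4 * L ^ 3) := by
  set D := 4 * L ^ 2 + w ^ 2 * x ^ 2
  have hD : 4 * L ^ 2 ≤ D := by nlinarith [sq_nonneg (w * x)]
  have hnum : |4 * L ^ 2 - 3 * w ^ 2 * x ^ 2| ≤ 3 * D := by
    rw [abs_le]; constructor <;> nlinarith [sq_nonneg (w * x)]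
  rw [abs_div, abs_mul, abs_mul, abs_pow, abs_of_pos (by positivity : 0 < 4 * L),
    abs_of_pos (by positivity : 0 < 3 * D ^ 3), div_le_div_iff₀ (by positivity) (by positivity)]
  calc 4 * L * |x| ^ 3 * |4 * L ^ 2 - 3 * w ^ 2 * x ^ 2| * (4 * L ^ 3)
      ≤ 4 * L * |x| ^ 3 * (3 * D) * (4 * L ^ 3) := by gcongr
    _ = |x| ^ 3 * (3 * D) * (4 * L ^ 2) ^ 2 := by ring
    _ ≤ |x| ^ 3 * (3 * D) * D ^ 2 := by gcongr
    _ = |x| ^ 3 * (3 * D ^ 3) := by ring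

theorem tendsto_sum_arctan_midpoint_correction (x : ℝ) :
    Tendsto (fun L : ℕ => ∑ ℓ ∈ Icc 1 L,
      4 * (L : ℝ) * x ^ 3 * (4 * (L : ℝ) ^ 2 - 3 * (2 * (ℓ : ℝ) - 1) ^ 2 * x ^ 2) /
        (3 * (4 * (L : ℝ) ^ 2 + (2 * (ℓ : ℝ) - 1) ^ 2 * x ^ 2) ^ 3)) atTop (nhds 0) := by
  have hbound : Tendsto (fun L : ℕ => |x| ^ 3 / (4 * (L : ℝ) ^ 2)) atTop (nhds 0) :=
    tendsto_const_nhds.div_atTop <| tendsto_const_nhds.pos_mul_atTop four_pos <|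
      (tendsto_pow_atTop two_ne_zero).comp tendsto_natCast_atTop_atTop
  refine squeeze_zero_norm' ?_ hbound
  filter_upwards [eventually_ne_atTop 0] with L hL
  have hL' : (0 : ℝ) < L := Nat.cast_pos.mpr (Nat.pos_of_ne_zero hL)
  calc _ ≤ ∑ ℓ ∈ Icc 1 L, |x| ^ 3 / (4 * (L : ℝ) ^ 3) :=
        (abs_sum_le_sum_abs _ _).trans <|
          sum_le_sum fun ℓ _ => abs_arctan_midpoint_correction_le x _ hL'
    _ = |x| ^ 3 / (4 * (L : ℝ) ^ 2) := by
        rw [sum_const, Nat.card_Icc, Nat.add_sub_cancel, nsmul_eq_mul]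
        field_simp

theorem sum_Icc_eq_midpointRiemannSum (x : ℝ) (L : ℕ) :
    ∑ ℓ ∈ Icc 1 L, 4 * (L : ℝ) * x / (4 * (L : ℝ) ^ 2 + (2 * (ℓ : ℝ) - 1) ^ 2 * x ^ 2) =
      midpointRiemannSum (fun t => x / (1 + (t * x) ^ 2)) 0 1 L := by
  rw [← Ico_add_one_right_eq_Icc, sum_Ico_eq_sum_range, Nat.add_sub_cancel, midpointRiemannSum]
  refine sum_congr rfl fun k hk => ?_
  have hL : (L : ℝ) ≠ 0 := Nat.cast_ne_zero.mpr (ne_zero_of_lt (mem_range.mp hk))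
  push_cast
  field_simp
  ring

theorem arctan_enhanced_midpoint_M2_limit (x : ℝ) :
    Tendsto
      (fun L : ℕ =>
        ∑ ℓ ∈ Finset.Icc 1 L,
          (4 * (L : ℝ) * x / (4 * (L : ℝ) ^ 2 + (2 * (ℓ : ℝ) - 1) ^ 2 * x ^ 2)
            - 4 * (L : ℝ) * x ^ 3 *
                (4 * (L : ℝ) ^ 2 - 3 * (2 * (ℓ : ℝ) - 1) ^ 2 * x ^ 2) /
              (3 * (4 * (L : ℝ) ^ 2 + (2 * (ℓ : ℝ) - 1) ^ 2 * x ^ 2) ^ 3)))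
      atTop (nhds (Real.arctan x)) := by
  have hmidpoint := (lipschitzWith_div_one_add_mul_sq x).tendsto_midpointRiemannSum 0 1
  rw [integral_div_one_add_mul_sq, one_mul, zero_mul, Real.arctan_zero, sub_zero] at hmidpoint
  simp only [sum_sub_distrib, sum_Icc_eq_midpointRiemannSum]
  simpa using hmidpoint.sub (tendsto_sum_arctan_midpoint_correction x)
end

section
/- For every real number x, arctan(x) equals the limit as L → ∞ (L a positive integer) of Σ_{ℓ=1}^{L} [ 4Lx / (4L² + (2ℓ−1)² x²) − 4Lx³ (4L² − 3(2ℓ−1)² x²) / (3 (4L² + (2ℓ−1)² x²)³) + 4Lx⁵ (16L⁴ − 40(2ℓ−1)² L² x² + 5(2ℓ−1)⁴ x⁴) / (5 (4L² + (2ℓ−1)² x²)⁵) − 4Lx⁷ (64L⁶ − 336(2ℓ−1)² L⁴ x² + 140(2ℓ−1)⁴ L² x⁴ − 7(2ℓ−1)⁶ x⁶) / (7 (4L² + (2ℓ−1)² x²)⁷) ]. -/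
/-!
With `a = (ℓ - 1) / L`, `b = ℓ / L` and `m = (a + b) / 2`, the first term of the `ℓ`-th summand
is `(b - a) · x / (1 + m² x²)`, the midpoint rule for
`arctan (b x) - arctan (a x) = ∫ₐᵇ x / (1 + t² x²) dt`.
Since `s ↦ 1 / (1 + s²)` is `1`-Lipschitz, the integrand is `x²`-Lipschitz in `t`, so the midpoint
rule errs by at most `x² / (2 L²)`. The three higher Taylor corrections are `O(1 / L³)` each. Hence
each summand differs from `arctan (b x) - arctan (a x)` by `O(1 / L²)`, and the sum, after
telescoping, differs from `arctan x` by `O(1 / L)`.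
-/

open Filter Finset Real

theorem abs_inv_one_add_sq_sub_inv_one_add_sq_le (r s : ℝ) :
    |(1 + r ^ 2)⁻¹ - (1 + s ^ 2)⁻¹| ≤ |r - s| := by
  have hr : 0 < 1 + r ^ 2 := by positivity
  have hs : 0 < 1 + s ^ 2 := by positivity
  have hsum : |s + r| ≤ (1 + r ^ 2) * (1 + s ^ 2) := by
    rw [abs_le]
    constructor <;> nlinarith [sq_nonneg (r - 1), sq_nonneg (s - 1), sq_nonneg (r + 1),
      sq_nonneg (s + 1), mul_nonneg (sq_nonneg r) (sq_nonneg s)]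
  rw [inv_sub_inv hr.ne' hs.ne', abs_div, abs_of_pos (mul_pos hr hs), div_le_iff₀ (mul_pos hr hs),
    show 1 + s ^ 2 - (1 + r ^ 2) = (r - s) * -(s + r) by ring, abs_mul, abs_neg]
  gcongr

theorem abs_arctan_mul_sub_sub_midpoint_le (x a b : ℝ) (hab : a ≤ b) :
    |arctan (b * x) - arctan (a * x) - (b - a) * (x * (1 + ((a + b) / 2 * x) ^ 2)⁻¹)|
      ≤ x ^ 2 * (b - a) ^ 2 / 2 := by
  set c := x * (1 + ((a + b) / 2 * x) ^ 2)⁻¹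
  have hderiv : ∀ t ∈ Set.Icc a b, HasDerivWithinAt (fun t => arctan (t * x) - c * t)
      (x * (1 + (t * x) ^ 2)⁻¹ - c) (Set.Icc a b) t := by
    intro t _
    have h : HasDerivAt (fun t => arctan (t * x) - c * t) (1 / (1 + (t * x) ^ 2) * x - c * 1) t :=
      (hasDerivAt_mul_const x).arctan.sub ((hasDerivAt_id t).const_mul c)
    exact h.hasDerivWithinAt.congr_deriv (by ring)
  have hbound : ∀ t ∈ Set.Icc a b, ‖x * (1 + (t * x) ^ 2)⁻¹ - c‖ ≤ x ^ 2 * ((b - a) / 2) := by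
    rintro t ⟨hat, htb⟩
    have hmid : |t * x - (a + b) / 2 * x| ≤ |x| * ((b - a) / 2) := by
      rw [← sub_mul, abs_mul, mul_comm]
      gcongr
      rw [abs_le]
      constructor <;> linarith
    calc ‖x * (1 + (t * x) ^ 2)⁻¹ - c‖
        = |x| * |(1 + (t * x) ^ 2)⁻¹ - (1 + ((a + b) / 2 * x) ^ 2)⁻¹| := by
          rw [Real.norm_eq_abs, ← abs_mul, mul_sub]
      _ ≤ |x| * (|x| * ((b - a) / 2)) := by
          gcongr
          exact (abs_inv_one_add_sq_sub_inv_one_add_sq_le _ _).trans hmid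
      _ = x ^ 2 * ((b - a) / 2) := by rw [← mul_assoc, ← sq, sq_abs]
  have hmvt := Convex.norm_image_sub_le_of_norm_hasDerivWithin_le hderiv hbound (convex_Icc a b)
    (Set.left_mem_Icc.2 hab) (Set.right_mem_Icc.2 hab)
  rw [Real.norm_eq_abs, Real.norm_eq_abs, abs_of_nonneg (sub_nonneg.2 hab)] at hmvt
  calc _ = |arctan (b * x) - c * b - (arctan (a * x) - c * a)| := by ring_nf
    _ ≤ x ^ 2 * ((b - a) / 2) * (b - a) := hmvt
    _ = x ^ 2 * (b - a) ^ 2 / 2 := by ring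

/-- The `k`-th Taylor correction of the summand has this shape, with `D = 4 L² + (2ℓ - 1)² x²`
and a numerator `N = O(D ^ k)`. -/
theorem abs_taylor_correction_le {L D y N B c : ℝ} (k : ℕ) (hk : 1 ≤ k) (hL : 1 ≤ L)
    (hD : 4 * L ^ 2 ≤ D) (hc : 1 ≤ c) (hN : |N| ≤ B * D ^ k) :
    |4 * L * y * N / (c * D ^ (2 * k + 1))| ≤ B * |y| / L ^ 2 := by
  have hD1 : 1 ≤ D := by nlinarith
  have hc0 : 0 < c := by linarith
  have hB : 0 ≤ B := nonneg_of_mul_nonneg_left ((abs_nonneg N).trans hN) (by positivity)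
  have hDk : 4 * L ^ 3 ≤ D ^ (k + 1) :=
    calc 4 * L ^ 3 ≤ (4 * L ^ 2) ^ 2 := by nlinarith [pow_le_pow_left₀ zero_le_one hL 3]
      _ ≤ D ^ 2 := by gcongr
      _ ≤ D ^ (k + 1) := pow_le_pow_right₀ hD1 (by omega)
  have hden : 0 < c * D ^ (2 * k + 1) := by positivity
  rw [abs_div, abs_of_pos hden, div_le_div_iff₀ hden (by positivity), abs_mul, abs_mul,
    abs_of_pos (by positivity : (0 : ℝ) < 4 * L)]
  calc 4 * L * |y| * |N| * L ^ 2 ≤ 4 * L ^ 3 * |y| * (B * D ^ k) := by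
        rw [show 4 * L * |y| * |N| * L ^ 2 = 4 * L ^ 3 * |y| * |N| by ring]
        gcongr
    _ ≤ D ^ (k + 1) * |y| * (B * D ^ k) := by gcongr
    _ = B * |y| * (1 * D ^ (2 * k + 1)) := by ring
    _ ≤ B * |y| * (c * D ^ (2 * k + 1)) := by gcongr

theorem sum_Icc_sub_sub_one (F : ℝ → ℝ) (N : ℕ) :
    ∑ ℓ ∈ Finset.Icc 1 N, (F ℓ - F (ℓ - 1)) = F N - F 0 := by
  induction N with
  | zero => simp
  | succ N ih =>
    rw [sum_Icc_succ_top (by omega), ih]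
    push_cast
    rw [add_sub_cancel_right]
    ring

noncomputable def arctanMidpointSummand (x L n : ℝ) : ℝ :=
  4 * L * x / (4 * L ^ 2 + (2 * n - 1) ^ 2 * x ^ 2)
    - 4 * L * x ^ 3 * (4 * L ^ 2 - 3 * (2 * n - 1) ^ 2 * x ^ 2) /
      (3 * (4 * L ^ 2 + (2 * n - 1) ^ 2 * x ^ 2) ^ 3)
    + 4 * L * x ^ 5 *
        (16 * L ^ 4 - 40 * (2 * n - 1) ^ 2 * L ^ 2 * x ^ 2 + 5 * (2 * n - 1) ^ 4 * x ^ 4) /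
      (5 * (4 * L ^ 2 + (2 * n - 1) ^ 2 * x ^ 2) ^ 5)
    - 4 * L * x ^ 7 *
        (64 * L ^ 6 - 336 * (2 * n - 1) ^ 2 * L ^ 4 * x ^ 2
          + 140 * (2 * n - 1) ^ 4 * L ^ 2 * x ^ 4 - 7 * (2 * n - 1) ^ 6 * x ^ 6) /
      (7 * (4 * L ^ 2 + (2 * n - 1) ^ 2 * x ^ 2) ^ 7)

theorem abs_midpoint_sub_arctan_sub_le (x L n : ℝ) (hL : 0 < L) :
    |4 * L * x / (4 * L ^ 2 + (2 * n - 1) ^ 2 * x ^ 2)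
      - (arctan (n / L * x) - arctan ((n - 1) / L * x))| ≤ x ^ 2 / 2 / L ^ 2 := by
  have hL0 : L ≠ 0 := hL.ne'
  have h := abs_arctan_mul_sub_sub_midpoint_le x ((n - 1) / L) (n / L) (by gcongr; linarith)
  have hmid : 4 * L * x / (4 * L ^ 2 + (2 * n - 1) ^ 2 * x ^ 2)
      = (n / L - (n - 1) / L) * (x * (1 + (((n - 1) / L + n / L) / 2 * x) ^ 2)⁻¹) := by
    field_simp
    ring
  have hwidth : n / L - (n - 1) / L = 1 / L := by ring
  rw [hmid, abs_sub_comm]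
  calc _ ≤ _ := h
    _ = x ^ 2 / 2 / L ^ 2 := by rw [hwidth]; ring

theorem abs_arctanMidpointSummand_sub_le (x L n : ℝ) (hL : 1 ≤ L) :
    |arctanMidpointSummand x L n - (arctan (n / L * x) - arctan ((n - 1) / L * x))|
      ≤ (x ^ 2 / 2 + 3 * |x| ^ 3 + 5 * |x| ^ 5 + 12 * |x| ^ 7) / L ^ 2 := by
  have h1 := abs_midpoint_sub_arctan_sub_le x L n (by linarith)
  rw [arctanMidpointSummand]
  set u := (2 * n - 1) ^ 2 * x ^ 2 with hu_def
  set a := 4 * L ^ 2 with ha_def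
  have hu : 0 ≤ u := by positivity
  have ha : 0 ≤ a := by positivity
  have hD : a ≤ a + u := le_add_of_nonneg_right hu
  have h3 := abs_taylor_correction_le (y := x ^ 3) (N := a - 3 * u) (B := 3) (c := 3) 1 le_rfl hL hD
    (by norm_num) (by rw [abs_le]; constructor <;> nlinarith)
  have h5 := abs_taylor_correction_le (y := x ^ 5) (N := a ^ 2 - 10 * a * u + 5 * u ^ 2)
    (B := 5) (c := 5) 2 (by norm_num) hL hD (by norm_num)
    (by rw [abs_le]; constructor <;> nlinarith [mul_nonneg ha hu])
  have h7 := abs_taylor_correction_le (y := x ^ 7)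
    (N := a ^ 3 - 21 * a ^ 2 * u + 35 * a * u ^ 2 - 7 * u ^ 3) (B := 12) (c := 7)
    3 (by norm_num) hL hD (by norm_num)
    (by rw [abs_le]; constructor <;> nlinarith [mul_nonneg ha hu, mul_nonneg (mul_nonneg ha hu) hu,
      mul_nonneg (mul_nonneg ha hu) ha, pow_nonneg ha 3, pow_nonneg hu 3])
  have e3 : a - 3 * (2 * n - 1) ^ 2 * x ^ 2 = a - 3 * u := by rw [hu_def]; ring
  have e5 : 16 * L ^ 4 - 40 * (2 * n - 1) ^ 2 * L ^ 2 * x ^ 2 + 5 * (2 * n - 1) ^ 4 * x ^ 4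
      = a ^ 2 - 10 * a * u + 5 * u ^ 2 := by rw [hu_def, ha_def]; ring
  have e7 : 64 * L ^ 6 - 336 * (2 * n - 1) ^ 2 * L ^ 4 * x ^ 2
      + 140 * (2 * n - 1) ^ 4 * L ^ 2 * x ^ 4 - 7 * (2 * n - 1) ^ 6 * x ^ 6
      = a ^ 3 - 21 * a ^ 2 * u + 35 * a * u ^ 2 - 7 * u ^ 3 := by rw [hu_def, ha_def]; ring
  rw [e3, e5, e7, add_div, add_div, add_div]
  simp only [Nat.reduceMul, Nat.reduceAdd, abs_pow] at h3 h5 h7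
  rw [abs_le] at h1 h3 h5 h7 ⊢
  constructor <;> linarith [h1.1, h1.2, h3.1, h3.2, h5.1, h5.2, h7.1, h7.2]

theorem arctan_enhanced_midpoint_M6_limit (x : ℝ) :
    Tendsto
      (fun L : ℕ =>
        ∑ ℓ ∈ Finset.Icc 1 L,
          (4 * (L : ℝ) * x / (4 * (L : ℝ) ^ 2 + (2 * (ℓ : ℝ) - 1) ^ 2 * x ^ 2)
            - 4 * (L : ℝ) * x ^ 3 *
                (4 * (L : ℝ) ^ 2 - 3 * (2 * (ℓ : ℝ) - 1) ^ 2 * x ^ 2) /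
              (3 * (4 * (L : ℝ) ^ 2 + (2 * (ℓ : ℝ) - 1) ^ 2 * x ^ 2) ^ 3)
            + 4 * (L : ℝ) * x ^ 5 *
                (16 * (L : ℝ) ^ 4 - 40 * (2 * (ℓ : ℝ) - 1) ^ 2 * (L : ℝ) ^ 2 * x ^ 2
                  + 5 * (2 * (ℓ : ℝ) - 1) ^ 4 * x ^ 4) /
              (5 * (4 * (L : ℝ) ^ 2 + (2 * (ℓ : ℝ) - 1) ^ 2 * x ^ 2) ^ 5)
            - 4 * (L : ℝ) * x ^ 7 *
                (64 * (L : ℝ) ^ 6 - 336 * (2 * (ℓ : ℝ) - 1) ^ 2 * (L : ℝ) ^ 4 * x ^ 2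
                  + 140 * (2 * (ℓ : ℝ) - 1) ^ 4 * (L : ℝ) ^ 2 * x ^ 4
                  - 7 * (2 * (ℓ : ℝ) - 1) ^ 6 * x ^ 6) /
              (7 * (4 * (L : ℝ) ^ 2 + (2 * (ℓ : ℝ) - 1) ^ 2 * x ^ 2) ^ 7)))
      atTop (nhds (Real.arctan x)) := by
  change Tendsto (fun L : ℕ => ∑ ℓ ∈ Finset.Icc 1 L, arctanMidpointSummand x L ℓ) atTop
    (nhds (arctan x))
  set C := x ^ 2 / 2 + 3 * |x| ^ 3 + 5 * |x| ^ 5 + 12 * |x| ^ 7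
  rw [tendsto_iff_dist_tendsto_zero]
  refine squeeze_zero' (Eventually.of_forall fun _ => dist_nonneg) ?_
    (tendsto_const_div_atTop_nhds_zero_nat C)
  filter_upwards [eventually_ge_atTop 1] with L hL
  have hL' : (1 : ℝ) ≤ L := by exact_mod_cast hL
  have htelescope := sum_Icc_sub_sub_one (fun t => arctan (t / L * x)) L
  simp only [div_self (by positivity : (L : ℝ) ≠ 0), one_mul, zero_div,
    zero_mul, arctan_zero, sub_zero] at htelescope
  rw [Real.dist_eq, ← htelescope, ← sum_sub_distrib]
  calc _ ≤ ∑ ℓ ∈ Finset.Icc 1 L, C / (L : ℝ) ^ 2 :=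
        (abs_sum_le_sum_abs _ _).trans
          (sum_le_sum fun ℓ _ => abs_arctanMidpointSummand_sub_le x L ℓ hL')
    _ = C / L := by
        rw [sum_const, Nat.card_Icc, add_tsub_cancel_right, nsmul_eq_mul]
        field_simp
end

section
/- π equals 4 times the limit as L → ∞ (L a positive integer) of Σ_{ℓ=1}^{L} [ 4L / (4L² + (2ℓ−1)²) − 4L (4L² − 3(2ℓ−1)²) / (3 (4L² + (2ℓ−1)²)³) ]. -/
/-!
The first summand is `1/L · f((2ℓ - 1)/(2L))` for `f x = 1/(1 + x²)`, so the first sum is the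
midpoint rule for `∫₀¹ f = arctan 1 = π/4` with `L` cells. As `f` is antitone on `[0, 1]`, on each
cell both the midpoint value and the cell average lie between the values of `f` at the endpoints,
so the total error is at most `(f 0 - f 1)/L`. The second summand is the next Taylor term of the
midpoint rule, of size `O(L⁻³)` per cell, so it contributes `O(L⁻²)` in total.
-/

open Filter Finset Set

theorem AntitoneOn.abs_mul_sub_integral_le {f : ℝ → ℝ} {x y t : ℝ} (hf : AntitoneOn f (Icc x y))
    (hxt : x ≤ t) (hty : t ≤ y) :
    |(y - x) * f t - ∫ s in x..y, f s| ≤ (y - x) * (f x - f y) := by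
  have hxy : x ≤ y := hxt.trans hty
  have hint : IntervalIntegrable f MeasureTheory.volume x y :=
    AntitoneOn.intervalIntegrable (by rwa [uIcc_of_le hxy])
  have hupper : (∫ s in x..y, f s) ≤ (y - x) * f x := by
    simpa [mul_comm] using intervalIntegral.integral_mono_on hxy hint intervalIntegrable_const
      fun s hs => hf ⟨le_rfl, hxy⟩ hs hs.1
  have hlower : (y - x) * f y ≤ ∫ s in x..y, f s := by
    simpa [mul_comm] using intervalIntegral.integral_mono_on hxy intervalIntegrable_const hint
      fun s hs => hf hs ⟨hxy, le_rfl⟩ hs.2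
  have hlen : 0 ≤ y - x := sub_nonneg.2 hxy
  have hleft : (y - x) * f y ≤ (y - x) * f t :=
    mul_le_mul_of_nonneg_left (hf ⟨hxt, hty⟩ ⟨hxy, le_rfl⟩ hty) hlen
  have hright : (y - x) * f t ≤ (y - x) * f x :=
    mul_le_mul_of_nonneg_left (hf ⟨le_rfl, hxy⟩ ⟨hxt, hty⟩ hxt) hlen
  rw [abs_sub_le_iff]
  constructor <;> linarith

noncomputable def midpointSum (f : ℝ → ℝ) (a b : ℝ) (n : ℕ) : ℝ :=
  (b - a) / n * ∑ i ∈ range n, f (a + (i + 1 / 2) * ((b - a) / n))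

theorem AntitoneOn.abs_midpointSum_sub_integral_le {f : ℝ → ℝ} {a b : ℝ} {n : ℕ}
    (hf : AntitoneOn f (Icc a b)) (hab : a ≤ b) (hn : 0 < n) :
    |midpointSum f a b n - ∫ x in a..b, f x| ≤ (b - a) / n * (f a - f b) := by
  set h := (b - a) / n with hh
  set node : ℕ → ℝ := fun i => a + i * h
  have hh0 : 0 ≤ h := div_nonneg (sub_nonneg.2 hab) n.cast_nonneg
  have hnode_last : node n = b := by simp only [node, hh]; field_simp; ring
  have hnode_mem : ∀ i ≤ n, node i ∈ Icc a b := fun i hi =>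
    ⟨le_add_of_nonneg_right (by positivity), by
      rw [← hnode_last]; simp only [node]; gcongr⟩
  have hcell : ∀ i < n, Icc (node i) (node (i + 1)) ⊆ Icc a b := fun i hi =>
    Icc_subset_Icc (hnode_mem i hi.le).1 (hnode_mem (i + 1) hi).2
  have hwidth : ∀ i, node (i + 1) - node i = h := fun i => by simp only [node]; push_cast; ring
  have hintegral : ∫ x in a..b, f x = ∑ i ∈ range n, ∫ x in node i..node (i + 1), f x := by
    rw [intervalIntegral.sum_integral_adjacent_intervals fun i hi => AntitoneOn.intervalIntegrable
      (hf.mono (uIcc_subset_Icc (hnode_mem i hi.le) (hnode_mem (i + 1) hi))), hnode_last]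
    simp [node]
  calc |midpointSum f a b n - ∫ x in a..b, f x|
      = |∑ i ∈ range n, ((node (i + 1) - node i) * f (a + (i + 1 / 2) * h)
          - ∫ x in node i..node (i + 1), f x)| := by
        simp only [hwidth, midpointSum, ← hh, hintegral, sum_sub_distrib, mul_sum]
    _ ≤ ∑ i ∈ range n, (node (i + 1) - node i) * (f (node i) - f (node (i + 1))) := by
        refine (abs_sum_le_sum_abs _ _).trans (sum_le_sum fun i hi => ?_)
        refine (hf.mono (hcell i (mem_range.1 hi))).abs_mul_sub_integral_le ?_ ?_ <;>
          simp only [node] <;> push_cast <;> nlinarith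
    _ = h * (f a - f b) := by
        simp only [hwidth, ← mul_sum, sum_range_sub' (fun i => f (node i)), hnode_last]
        simp [node]

theorem AntitoneOn.tendsto_midpointSum {f : ℝ → ℝ} {a b : ℝ} (hf : AntitoneOn f (Icc a b))
    (hab : a ≤ b) :
    Tendsto (midpointSum f a b) atTop (nhds (∫ x in a..b, f x)) := by
  rw [tendsto_iff_norm_sub_tendsto_zero]
  have hbound : Tendsto (fun n : ℕ => (b - a) * (f a - f b) / n) atTop (nhds 0) :=
    tendsto_const_div_atTop_nhds_zero_nat _
  refine squeeze_zero_norm' ?_ hbound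
  filter_upwards [eventually_gt_atTop 0] with n hn
  rw [norm_norm, Real.norm_eq_abs, mul_div_right_comm]
  exact hf.abs_midpointSum_sub_integral_le hab hn

theorem antitoneOn_inv_one_add_sq : AntitoneOn (fun x : ℝ => (1 + x ^ 2)⁻¹) (Ici 0) :=
  fun x hx y _ hxy => inv_anti₀ (by positivity) (by gcongr)

theorem midpointSum_inv_one_add_sq (L : ℕ) :
    midpointSum (fun x : ℝ => (1 + x ^ 2)⁻¹) 0 1 L =
      ∑ ℓ ∈ Icc 1 L, 4 * (L : ℝ) / (4 * (L : ℝ) ^ 2 + (2 * (ℓ : ℝ) - 1) ^ 2) := by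
  rcases L.eq_zero_or_pos with rfl | hL
  · simp [midpointSum]
  rw [midpointSum, mul_sum, ← Finset.Ico_add_one_right_eq_Icc, sum_Ico_eq_sum_range,
    add_tsub_cancel_right]
  refine sum_congr rfl fun i _ => ?_
  push_cast
  field_simp
  ring

theorem abs_midpoint_correction_le {L : ℝ} (hL : 0 < L) (m : ℝ) :
    |4 * L * (4 * L ^ 2 - 3 * m ^ 2) / (3 * (4 * L ^ 2 + m ^ 2) ^ 3)| ≤ 1 / (4 * L ^ 3) := by
  set D := 4 * L ^ 2 + m ^ 2
  have hLD : 4 * L ^ 2 ≤ D := le_add_of_nonneg_right (sq_nonneg m)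
  have hnum : |4 * L ^ 2 - 3 * m ^ 2| ≤ 3 * D := abs_le.2 ⟨by nlinarith, by nlinarith⟩
  rw [abs_div, abs_mul, abs_of_pos (by positivity : 0 < 4 * L),
    abs_of_pos (by positivity : 0 < 3 * D ^ 3), div_le_div_iff₀ (by positivity) (by positivity)]
  calc 4 * L * |4 * L ^ 2 - 3 * m ^ 2| * (4 * L ^ 3)
      ≤ 4 * L * (3 * D) * (4 * L ^ 3) := by gcongr
    _ = 3 * (4 * L ^ 2) ^ 2 * D := by ring
    _ ≤ 3 * D ^ 2 * D := by gcongr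
    _ = 1 * (3 * D ^ 3) := by ring

theorem tendsto_sum_midpoint_correction :
    Tendsto (fun L : ℕ => ∑ ℓ ∈ Icc 1 L,
        4 * (L : ℝ) * (4 * (L : ℝ) ^ 2 - 3 * (2 * (ℓ : ℝ) - 1) ^ 2) /
          (3 * (4 * (L : ℝ) ^ 2 + (2 * (ℓ : ℝ) - 1) ^ 2) ^ 3))
      atTop (nhds 0) := by
  have hbound : Tendsto (fun L : ℕ => (1 / (L : ℝ)) ^ 2 / 4) atTop (nhds 0) := by
    simpa using (tendsto_one_div_atTop_nhds_zero_nat (𝕜 := ℝ) |>.pow 2).div_const 4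
  refine squeeze_zero_norm' ?_ hbound
  filter_upwards [eventually_gt_atTop 0] with L hL
  have hL' : (0 : ℝ) < L := Nat.cast_pos.2 hL
  calc _ ≤ ∑ ℓ ∈ Icc 1 L, 1 / (4 * (L : ℝ) ^ 3) :=
        norm_sum_le_of_le _ fun ℓ _ => abs_midpoint_correction_le hL' _
    _ = (1 / (L : ℝ)) ^ 2 / 4 := by
        rw [sum_const, Nat.card_Icc, add_tsub_cancel_right, nsmul_eq_mul]
        field_simp

theorem pi_enhanced_midpoint_M2_limit :
    Tendsto
      (fun L : ℕ =>
        4 * ∑ ℓ ∈ Finset.Icc 1 L,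
          (4 * (L : ℝ) / (4 * (L : ℝ) ^ 2 + (2 * (ℓ : ℝ) - 1) ^ 2)
            - 4 * (L : ℝ) * (4 * (L : ℝ) ^ 2 - 3 * (2 * (ℓ : ℝ) - 1) ^ 2) /
              (3 * (4 * (L : ℝ) ^ 2 + (2 * (ℓ : ℝ) - 1) ^ 2) ^ 3)))
      atTop (nhds Real.pi) := by
  have hmain := (antitoneOn_inv_one_add_sq.mono Icc_subset_Ici_self).tendsto_midpointSum zero_le_one
  rw [integral_inv_one_add_sq, Real.arctan_one, Real.arctan_zero, sub_zero] at hmain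
  have hlim :=
    ((hmain.congr midpointSum_inv_one_add_sq).sub tendsto_sum_midpoint_correction).const_mul 4
  rw [sub_zero, mul_div_cancel₀ _ four_ne_zero] at hlim
  simpa only [sum_sub_distrib] using hlim
end

section
/- π equals 4 times the limit as L → ∞ (L a positive integer) of Σ_{ℓ=1}^{L} [ 4L / (4L² + (2ℓ−1)²) − 4L (4L² − 3(2ℓ−1)²) / (3 (4L² + (2ℓ−1)²)³) + 4L (16L⁴ − 40(2ℓ−1)² L² + 5(2ℓ−1)⁴) / (5 (4L² + (2ℓ−1)²)⁵) − 4L (64L⁶ − 336(2ℓ−1)² L⁴ + 140(2ℓ−1)⁴ L² − 7(2ℓ−1)⁶) / (7 (4L² + (2ℓ−1)²)⁷) ]. -/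
/-!
With `d = 2ℓ - 1`, the `ℓ`-th summand is the order-6 Taylor expansion, around the midpoint
`d / (2L)`, of `arctan (ℓ / L) - arctan ((ℓ - 1) / L)`. These differences telescope to
`arctan 1 = π / 4`, so it suffices that each summand is within `1 / L³` of its difference.
By the subtraction formula the difference is `arctan u` with `u = 4L / (4L² + d² - 1)`;
the leading term `4L / (4L² + d²)` is within `1 / (4L³)` of `u`, `u` is within `u³ / 3` of
`arctan u`, and each correction term is `O(1 / L³)` because its numerator is
`Re ((2L + d i) ^ k) / (2L)`, bounded by `|2L + d i| ^ k / (2L)`.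
-/

open Filter

namespace Real

theorem arctan_le_self {x : ℝ} (hx : 0 ≤ x) : arctan x ≤ x := by
  simpa using le_tan (arctan_nonneg.mpr hx) (arctan_lt_pi_div_two x)

theorem self_sub_pow_three_div_three_le_arctan {x : ℝ} (hx : 0 ≤ x) :
    x - x ^ 3 / 3 ≤ arctan x := by
  have hderiv (t : ℝ) : HasDerivAt (fun t => arctan t - (t - t ^ 3 / 3))
      (t ^ 4 / (1 + t ^ 2)) t := by
    refine ((hasDerivAt_arctan t).sub
      ((hasDerivAt_id' t).sub ((hasDerivAt_pow 3 t).div_const 3))).congr_deriv ?_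
    push_cast
    field_simp
    ring
  have hmono := monotone_of_hasDerivAt_nonneg hderiv (fun t => by positivity)
  simpa using hmono hx

theorem arctan_sub_arctan {x y : ℝ} (h : -1 < x * y) :
    arctan x - arctan y = arctan ((x - y) / (1 + x * y)) := by
  rw [sub_eq_add_neg, ← arctan_neg, arctan_add (by linarith)]
  ring_nf

end Real

open Real

theorem sum_Icc_one_sub (g : ℝ → ℝ) (L : ℕ) :
    ∑ ℓ ∈ Finset.Icc 1 L, (g ℓ - g (ℓ - 1)) = g L - g 0 := by
  induction L with
  | zero => simp
  | succ L ih =>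
    rw [Finset.sum_Icc_succ_top (by omega), ih]
    push_cast
    rw [add_sub_cancel_right]
    ring

theorem abs_mul_div_pow_le {n P D c : ℝ} (k : ℕ) (hn : 0 < n) (hc : 0 < c)
    (hD : 4 * n ^ 2 ≤ D) (hP : 4 * n ^ 2 * P ^ 2 ≤ D ^ k) :
    |4 * n * P / (c * D ^ k)| ≤ 2 / (c * (2 * n) ^ k) := by
  have hD0 : 0 < D := lt_of_lt_of_le (by positivity) hD
  refine abs_le_of_sq_le_sq ?_ (by positivity)
  calc (4 * n * P / (c * D ^ k)) ^ 2 = 4 * (4 * n ^ 2 * P ^ 2) / (c ^ 2 * (D ^ k) ^ 2) := by ring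
    _ ≤ 4 * D ^ k / (c ^ 2 * (D ^ k) ^ 2) := by gcongr
    _ = 4 / (c ^ 2 * D ^ k) := by field_simp
    _ ≤ 4 / (c ^ 2 * (4 * n ^ 2) ^ k) := by gcongr
    _ = (2 / (c * (2 * n) ^ k)) ^ 2 := by
      rw [show 4 * n ^ 2 = (2 * n) ^ 2 by ring, ← pow_mul, mul_comm 2 k, pow_mul]
      ring

noncomputable def enhancedMidpointTerm (n d : ℝ) : ℝ :=
  4 * n / (4 * n ^ 2 + d ^ 2)
    - 4 * n * (4 * n ^ 2 - 3 * d ^ 2) / (3 * (4 * n ^ 2 + d ^ 2) ^ 3)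
    + 4 * n * (16 * n ^ 4 - 40 * d ^ 2 * n ^ 2 + 5 * d ^ 4) / (5 * (4 * n ^ 2 + d ^ 2) ^ 5)
    - 4 * n * (64 * n ^ 6 - 336 * d ^ 2 * n ^ 4 + 140 * d ^ 4 * n ^ 2 - 7 * d ^ 6) /
      (7 * (4 * n ^ 2 + d ^ 2) ^ 7)

theorem abs_enhancedMidpointTerm_sub_arctan_le {n d : ℝ} (hn : 1 ≤ n) (hd : 1 ≤ d) :
    |enhancedMidpointTerm n d - (arctan ((d + 1) / (2 * n)) - arctan ((d - 1) / (2 * n)))|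
      ≤ 1 / n ^ 3 := by
  have hn0 : 0 < n := by linarith
  set D := 4 * n ^ 2 + d ^ 2
  have hDn : 4 * n ^ 2 ≤ D := by nlinarith
  have hDn' : 4 * n ^ 2 ≤ D - 1 := by nlinarith
  have hD0 : 0 < D := by positivity
  have hD1 : 0 < D - 1 := lt_of_lt_of_le (by positivity) hDn'
  set u := 4 * n / (D - 1) with hu
  have hu0 : 0 ≤ u := by positivity
  have harctan : arctan ((d + 1) / (2 * n)) - arctan ((d - 1) / (2 * n)) = arctan u := by
    have : 0 ≤ (d + 1) / (2 * n) * ((d - 1) / (2 * n)) := by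
      apply mul_nonneg <;> apply div_nonneg <;> linarith
    rw [arctan_sub_arctan (by linarith)]
    congr 1
    field_simp
    ring
  have h₁ : |4 * n / D - u| ≤ 1 / (4 * n ^ 3) := by
    have heq : u - 4 * n / D = 4 * n / (D * (D - 1)) := by
      rw [hu]
      field_simp
      ring
    rw [abs_sub_comm, heq, abs_of_nonneg (by positivity)]
    calc 4 * n / (D * (D - 1)) ≤ 4 * n / (4 * n ^ 2 * (4 * n ^ 2)) := by gcongr
      _ = 1 / (4 * n ^ 3) := by field_simp
  have h₂ : |u - arctan u| ≤ 1 / (3 * n ^ 3) := by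
    have hun : u ≤ 1 / n := by
      rw [div_le_div_iff₀ hD1 hn0]
      nlinarith
    have hcube : u ^ 3 / 3 ≤ 1 / (3 * n ^ 3) := by
      calc u ^ 3 / 3 ≤ (1 / n) ^ 3 / 3 := by gcongr
        _ = 1 / (3 * n ^ 3) := by ring
    rw [abs_of_nonneg (sub_nonneg.mpr (arctan_le_self hu0))]
    linarith [self_sub_pow_three_div_three_le_arctan hu0]
  -- `2 n P` and `Q` are the real and imaginary parts of `(2 n + d i) ^ k`, so `4 n² P² + Q² = D ^ k`.
  have h₃ := abs_mul_div_pow_le (P := 4 * n ^ 2 - 3 * d ^ 2) (c := 3) 3 hn0 (by norm_num) hDn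
    (by nlinarith [sq_nonneg (12 * n ^ 2 * d - d ^ 3)])
  have h₅ := abs_mul_div_pow_le (P := 16 * n ^ 4 - 40 * d ^ 2 * n ^ 2 + 5 * d ^ 4) (c := 5) 5 hn0
    (by norm_num) hDn (by nlinarith [sq_nonneg (80 * n ^ 4 * d - 40 * n ^ 2 * d ^ 3 + d ^ 5)])
  have h₇ := abs_mul_div_pow_le
    (P := 64 * n ^ 6 - 336 * d ^ 2 * n ^ 4 + 140 * d ^ 4 * n ^ 2 - 7 * d ^ 6) (c := 7) 7 hn0
    (by norm_num) hDn
    (by nlinarith [sq_nonneg (448 * n ^ 6 * d - 560 * n ^ 4 * d ^ 3 + 84 * n ^ 2 * d ^ 5 - d ^ 7)])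
  have htotal : 1 / (4 * n ^ 3) + 1 / (3 * n ^ 3) + 2 / (3 * (2 * n) ^ 3) + 2 / (5 * (2 * n) ^ 5)
      + 2 / (7 * (2 * n) ^ 7) ≤ 1 / n ^ 3 := by
    have h2n : 1 ≤ 2 * n := by linarith
    have h₅' : 2 / (5 * (2 * n) ^ 5) ≤ 2 / (5 * (2 * n) ^ 3) := by gcongr; norm_num
    have h₇' : 2 / (7 * (2 * n) ^ 7) ≤ 2 / (7 * (2 * n) ^ 3) := by gcongr; norm_num
    have heq : 1 / (4 * n ^ 3) + 1 / (3 * n ^ 3) + 2 / (3 * (2 * n) ^ 3) + 2 / (5 * (2 * n) ^ 3)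
        + 2 / (7 * (2 * n) ^ 3) = 79 / 105 / n ^ 3 := by
      field_simp
      ring
    have : 79 / 105 / n ^ 3 ≤ 1 / n ^ 3 := by gcongr; norm_num
    linarith
  rw [harctan, abs_le]
  unfold enhancedMidpointTerm
  constructor <;> linarith [abs_le.mp h₁, abs_le.mp h₂, abs_le.mp h₃, abs_le.mp h₅, abs_le.mp h₇]

theorem abs_sum_enhancedMidpointTerm_sub_pi_div_four_le {L : ℕ} (hL : 1 ≤ L) :
    |∑ ℓ ∈ Finset.Icc 1 L, enhancedMidpointTerm L (2 * ℓ - 1) - π / 4| ≤ 1 / (L : ℝ) ^ 2 := by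
  have hL₁ : (1 : ℝ) ≤ L := by exact_mod_cast hL
  have htelescope : ∑ ℓ ∈ Finset.Icc 1 L,
      (arctan ((2 * ℓ - 1 + 1) / (2 * L)) - arctan ((2 * ℓ - 1 - 1) / (2 * L))) = π / 4 := by
    have h := sum_Icc_one_sub (fun x => arctan (x / L)) L
    rw [div_self (by positivity), arctan_one, zero_div, arctan_zero, sub_zero] at h
    rw [← h]
    refine Finset.sum_congr rfl fun ℓ _ => ?_
    congr 2 <;> field_simp <;> ring
  rw [← htelescope, ← Finset.sum_sub_distrib]
  calc _ ≤ ∑ ℓ ∈ Finset.Icc 1 L, |enhancedMidpointTerm L (2 * ℓ - 1)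
          - (arctan ((2 * ℓ - 1 + 1) / (2 * L)) - arctan ((2 * ℓ - 1 - 1) / (2 * L)))| :=
        Finset.abs_sum_le_sum_abs _ _
    _ ≤ ∑ ℓ ∈ Finset.Icc 1 L, 1 / (L : ℝ) ^ 3 := by
        gcongr with ℓ hℓ
        have hℓ₁ : (1 : ℝ) ≤ ℓ := by exact_mod_cast (Finset.mem_Icc.mp hℓ).1
        exact abs_enhancedMidpointTerm_sub_arctan_le hL₁ (by linarith)
    _ = 1 / (L : ℝ) ^ 2 := by
        rw [Finset.sum_const, Nat.card_Icc, nsmul_eq_mul]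
        field_simp
        simp

theorem pi_enhanced_midpoint_M6_limit :
    Tendsto
      (fun L : ℕ =>
        4 * ∑ ℓ ∈ Finset.Icc 1 L,
          (4 * (L : ℝ) / (4 * (L : ℝ) ^ 2 + (2 * (ℓ : ℝ) - 1) ^ 2)
            - 4 * (L : ℝ) * (4 * (L : ℝ) ^ 2 - 3 * (2 * (ℓ : ℝ) - 1) ^ 2) /
              (3 * (4 * (L : ℝ) ^ 2 + (2 * (ℓ : ℝ) - 1) ^ 2) ^ 3)
            + 4 * (L : ℝ) *
                (16 * (L : ℝ) ^ 4 - 40 * (2 * (ℓ : ℝ) - 1) ^ 2 * (L : ℝ) ^ 2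
                  + 5 * (2 * (ℓ : ℝ) - 1) ^ 4) /
              (5 * (4 * (L : ℝ) ^ 2 + (2 * (ℓ : ℝ) - 1) ^ 2) ^ 5)
            - 4 * (L : ℝ) *
                (64 * (L : ℝ) ^ 6 - 336 * (2 * (ℓ : ℝ) - 1) ^ 2 * (L : ℝ) ^ 4
                  + 140 * (2 * (ℓ : ℝ) - 1) ^ 4 * (L : ℝ) ^ 2
                  - 7 * (2 * (ℓ : ℝ) - 1) ^ 6) /
              (7 * (4 * (L : ℝ) ^ 2 + (2 * (ℓ : ℝ) - 1) ^ 2) ^ 7)))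
      atTop (nhds Real.pi) := by
  change Tendsto (fun L : ℕ => 4 * ∑ ℓ ∈ Finset.Icc 1 L, enhancedMidpointTerm L (2 * ℓ - 1))
    atTop (nhds π)
  rw [← tendsto_sub_nhds_zero_iff]
  refine squeeze_zero_norm' ?_ (tendsto_const_div_atTop_nhds_zero_nat 4)
  filter_upwards [eventually_ge_atTop 1] with L hL
  have hL₁ : (1 : ℝ) ≤ L := by exact_mod_cast hL
  have hS := abs_sum_enhancedMidpointTerm_sub_pi_div_four_le hL
  set S := ∑ ℓ ∈ Finset.Icc 1 L, enhancedMidpointTerm L (2 * ℓ - 1)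
  calc ‖4 * S - π‖ = ‖(4 : ℝ)‖ * |S - π / 4| := by rw [← Real.norm_eq_abs, ← norm_mul]; ring_nf
    _ ≤ 4 * (1 / (L : ℝ) ^ 2) := by rw [Real.norm_ofNat]; gcongr
    _ ≤ 4 / L := by
        rw [mul_one_div]
        gcongr
        exact le_self_pow₀ hL₁ two_ne_zero
end

section
/- For every fixed positive integer L, π = 4 · Σ_{ℓ=1}^{L} Σ_{m=0}^{∞} ((−1)^m + 1)/((2L)^{m+1} (m+1)!) · g_{ℓ,m}, where g_{ℓ,m} is the m-th derivative of the function t ↦ 1/(1 + t²) evaluated at t = (2ℓ−1)/(2L), and the inner series converges for each ℓ. -/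
/-!
Since `arctan 1 = π / 4`, the sum over `ℓ` telescopes once each inner series is shown to equal
`arctan (c + d) - arctan (c - d)`, where `c` is the midpoint of the `ℓ`-th subinterval and
`d = 1 / (2L)` its half-length. The complex arctangent is holomorphic on the strip `|Im z| < 1`,
which contains the unit disc around every real `c`, so its Taylor series at `c` converges at
`c ± d`. In the difference of the two expansions only odd powers of `d` survive, and the
`(m + 1)`-st derivative of `arctan` at a real point is the `m`-th derivative of `1 / (1 + t²)`.
-/

open Topology

namespace Complex

theorem one_sub_mul_I_ne_zero_of_abs_im_lt_one {z : ℂ} (hz : |z.im| < 1) : 1 - z * I ≠ 0 := by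
  intro h
  have := congrArg re h
  simp only [sub_re, one_re, mul_re, I_re, mul_zero, I_im, mul_one, zero_sub, sub_neg_eq_add,
    zero_re] at this
  linarith [abs_lt.mp hz]

/-- With `z = x + yi`, the quotient has real part `(1 - x² - y²) / ‖1 - zI‖²` and imaginary part
`2x / ‖1 - zI‖²`. -/
theorem div_one_sub_mul_I_mem_slitPlane {z : ℂ} (hz : |z.im| < 1) :
    (1 + z * I) / (1 - z * I) ∈ slitPlane := by
  have hb : 0 < normSq (1 - z * I) := normSq_pos.mpr (one_sub_mul_I_ne_zero_of_abs_im_lt_one hz)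
  rw [mem_slitPlane_iff, div_re, div_im]
  simp only [add_re, add_im, sub_re, sub_im, mul_re, mul_im, one_re, one_im, I_re, I_im]
  rcases eq_or_ne z.re 0 with hre | hre
  · left
    rw [hre, ← add_div]
    have : z.im ^ 2 < 1 := by nlinarith [abs_lt.mp hz]
    apply div_pos _ hb
    nlinarith
  · right
    rw [← sub_div]
    apply div_ne_zero _ hb.ne'
    ring_nf
    simpa using hre

theorem hasDerivAt_arctan {z : ℂ} (hz : |z.im| < 1) :
    HasDerivAt arctan (1 / (1 + z ^ 2)) z := by
  have hminus := one_sub_mul_I_ne_zero_of_abs_im_lt_one hz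
  have hplus : 1 + z * I ≠ 0 := by
    simpa using one_sub_mul_I_ne_zero_of_abs_im_lt_one (z := -z) (by simpa using hz)
  have hw : HasDerivAt (fun z : ℂ => (1 + z * I) / (1 - z * I))
      ((I * (1 - z * I) - (1 + z * I) * (-I)) / (1 - z * I) ^ 2) z := by
    have hp : HasDerivAt (fun z : ℂ => 1 + z * I) I z := by
      simpa using ((hasDerivAt_id z).mul_const I).const_add 1
    have hm : HasDerivAt (fun z : ℂ => 1 - z * I) (-I) z := by
      simpa using ((hasDerivAt_id z).mul_const I).const_sub 1
    exact hp.div hm hminus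
  have hderiv : -I / 2 * ((I * (1 - z * I) - (1 + z * I) * (-I)) / (1 - z * I) ^ 2 /
      ((1 + z * I) / (1 - z * I))) = 1 / (1 + z ^ 2) := by
    have hfac : (1 : ℂ) + z ^ 2 = (1 - z * I) * (1 + z * I) := by
      linear_combination (z ^ 2 : ℂ) * I_sq
    rw [show I * (1 - z * I) - (1 + z * I) * (-I) = 2 * I by ring, hfac]
    field_simp
    rw [I_sq]
    ring
  rw [← hderiv]
  exact (hw.clog (div_one_sub_mul_I_mem_slitPlane hz)).const_mul (-I / 2)

theorem differentiableOn_arctan_of_abs_im_lt_one :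
    DifferentiableOn ℂ arctan {z : ℂ | |z.im| < 1} :=
  fun _ hz => (hasDerivAt_arctan hz).differentiableAt.differentiableWithinAt

theorem iteratedDeriv_ofReal_eq {f : ℂ → ℂ} {g : ℝ → ℝ} {U : Set ℂ} (hU : IsOpen U)
    (hf : DifferentiableOn ℂ f U) (hfg : ∀ y : ℝ, (y : ℂ) ∈ U → f y = g y) (n : ℕ) :
    ∀ x : ℝ, (x : ℂ) ∈ U → iteratedDeriv n f x = (iteratedDeriv n g x : ℝ) := by
  induction n with
  | zero => simpa using hfg
  | succ n ih =>
    intro x hx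
    have hfn : HasDerivAt (iteratedDeriv n f) (iteratedDeriv (n + 1) f x) x := by
      rw [iteratedDeriv_succ, iteratedDeriv_eq_iterate]
      exact ((hf.analyticOnNhd hU).iterated_deriv n x hx).differentiableAt.hasDerivAt
    have hnear : ∀ᶠ y : ℝ in 𝓝 x, (y : ℂ) ∈ U :=
      continuous_ofReal.continuousAt.preimage_mem_nhds (hU.mem_nhds hx)
    have hc : HasDerivAt (fun y : ℝ => ((iteratedDeriv n g y : ℝ) : ℂ))
        (iteratedDeriv (n + 1) f x) x :=
      hfn.comp_ofReal.congr_of_eventuallyEq (hnear.mono fun y hy => (ih y hy).symm)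
    have hg : HasDerivAt (iteratedDeriv n g) (iteratedDeriv (n + 1) f x).re x := by
      simpa [Function.comp_def] using reCLM.hasFDerivAt.comp_hasDerivAt x hc
    rw [hc.unique hg.ofReal_comp, iteratedDeriv_succ (f := g), hg.deriv]

theorem iteratedDeriv_succ_arctan_ofReal (n : ℕ) (x : ℝ) :
    iteratedDeriv (n + 1) arctan (x : ℂ) =
      (iteratedDeriv n (fun t : ℝ => 1 / (1 + t ^ 2)) x : ℝ) := by
  have hU : IsOpen {z : ℂ | |z.im| < 1} :=
    isOpen_lt (continuous_abs.comp continuous_im) continuous_const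
  rw [iteratedDeriv_ofReal_eq hU differentiableOn_arctan_of_abs_im_lt_one
    (fun y _ => (ofReal_arctan y).symm) (n + 1) x (by simp), iteratedDeriv_succ',
    Real.deriv_arctan]

theorem hasSum_taylorSeries_sub_on_ball {E : Type*} [NormedAddCommGroup E] [NormedSpace ℂ E]
    [CompleteSpace E] {f : ℂ → E} {c d : ℂ} {r : ℝ}
    (hf : DifferentiableOn ℂ f (Metric.ball c r)) (hd : ‖d‖ < r) :
    HasSum (fun n : ℕ => (((-1) ^ n + 1) * d ^ (n + 1) / (n + 1).factorial : ℂ) •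
      iteratedDeriv (n + 1) f c) (f (c + d) - f (c - d)) := by
  have hplus : c + d ∈ Metric.ball c r := by simpa using hd
  have hminus : c - d ∈ Metric.ball c r := by simpa using hd
  have S := (hasSum_taylorSeries_on_ball hf hplus).sub (hasSum_taylorSeries_on_ball hf hminus)
  rw [← hasSum_nat_add_iff' 1] at S
  simp only [Finset.sum_range_one, pow_zero, one_smul, sub_self, sub_zero, add_sub_cancel_left,
    sub_sub_cancel_left] at S
  convert S using 2 with n
  rw [smul_smul, smul_smul, ← sub_smul, neg_pow]
  congr 1
  ring

end Complex

theorem Real.hasSum_arctan_add_sub_arctan_sub (c : ℝ) {d : ℝ} (hd : |d| < 1) :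
    HasSum (fun n : ℕ => ((-1) ^ n + 1) * d ^ (n + 1) / (n + 1).factorial *
      iteratedDeriv n (fun t : ℝ => 1 / (1 + t ^ 2)) c) (arctan (c + d) - arctan (c - d)) := by
  have hball : Metric.ball (c : ℂ) 1 ⊆ {z : ℂ | |z.im| < 1} := fun z hz =>
    calc |z.im| = |(z - c).im| := by simp
      _ ≤ ‖z - c‖ := Complex.abs_im_le_norm _
      _ < 1 := mem_ball_iff_norm.mp hz
  have S := Complex.hasSum_taylorSeries_sub_on_ball
    (Complex.differentiableOn_arctan_of_abs_im_lt_one.mono hball) (d := d) (by simpa using hd)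
  simp only [Complex.iteratedDeriv_succ_arctan_ofReal, smul_eq_mul] at S
  rw [← Complex.hasSum_ofReal]
  push_cast [Complex.ofReal_arctan]
  exact S

theorem Finset.sum_Icc_sub_telescope {G : Type*} [AddCommGroup G] (f : ℝ → G) (n : ℕ) :
    ∑ i ∈ Finset.Icc 1 n, (f i - f (i - 1)) = f n - f 0 := by
  induction n with
  | zero => simp
  | succ n ih =>
    rw [Finset.sum_Icc_succ_top (by omega), ih]
    push_cast
    simp

theorem hasSum_arctan_sub_arctan_of_midpoint (L ℓ : ℕ) (hL : 0 < L) :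
    HasSum (fun m : ℕ =>
        (((-1 : ℝ) ^ m + 1) / ((2 * L : ℝ) ^ (m + 1) * ((m + 1).factorial : ℝ))) *
          iteratedDeriv m (fun t : ℝ => 1 / (1 + t ^ 2)) ((2 * (ℓ : ℝ) - 1) / (2 * L)))
      (Real.arctan (ℓ / L) - Real.arctan ((ℓ - 1) / L)) := by
  have hd : |1 / (2 * (L : ℝ))| < 1 := by
    have : (1 : ℝ) ≤ L := by exact_mod_cast hL
    rw [abs_of_pos (by positivity), div_lt_one (by positivity)]
    linarith
  convert Real.hasSum_arctan_add_sub_arctan_sub ((2 * ℓ - 1) / (2 * L)) hd using 1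
  · ext m
    rw [one_div_pow]
    ring
  · congr 2 <;> field_simp <;> ring

theorem pi_eq_double_series (L : ℕ) (hL : 0 < L) :
    (∀ ℓ ∈ Finset.Icc 1 L,
      Summable (fun m : ℕ =>
        (((-1 : ℝ) ^ m + 1) / ((2 * L : ℝ) ^ (m + 1) * ((m + 1).factorial : ℝ))) *
          iteratedDeriv m (fun t : ℝ => 1 / (1 + t ^ 2))
            ((2 * (ℓ : ℝ) - 1) / (2 * L)))) ∧
    Real.pi =
      4 * ∑ ℓ ∈ Finset.Icc 1 L, ∑' m : ℕ,
        (((-1 : ℝ) ^ m + 1) / ((2 * L : ℝ) ^ (m + 1) * ((m + 1).factorial : ℝ))) *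
          iteratedDeriv m (fun t : ℝ => 1 / (1 + t ^ 2))
            ((2 * (ℓ : ℝ) - 1) / (2 * L)) := by
  have hsum := fun ℓ => hasSum_arctan_sub_arctan_of_midpoint L ℓ hL
  refine ⟨fun ℓ _ => (hsum ℓ).summable, ?_⟩
  have htelescope := Finset.sum_Icc_sub_telescope (fun x : ℝ => Real.arctan (x / L)) L
  have hL' : (L : ℝ) ≠ 0 := by positivity
  simp only [div_self hL', zero_div, Real.arctan_one, Real.arctan_zero] at htelescope
  rw [Finset.sum_congr rfl fun ℓ _ => (hsum ℓ).tsum_eq, htelescope]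
  ring
end

section
/- For every positive integer L and every real number x with |x| < 2L, arctan(x) = Σ_{ℓ=1}^{L} Σ_{m=0}^{∞} ((−1)^m + 1)/((2L)^{m+1} (m+1)!) · (d^m/dt^m)[x/(1 + x²t²)] evaluated at t = (2ℓ−1)/(2L), where the inner series converges for each ℓ. -/
/-!
On the `ℓ`-th cell, with midpoint `t₀` and half-width `h = 1/(2L)`, the inner series is the
midpoint Taylor expansion of `∫_{t₀-h}^{t₀+h} x/(1+x²t²) dt = arctan (x(t₀+h)) - arctan (x(t₀-h))`,
and summing over the cells telescopes to `arctan x`.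

To sum the Taylor series without integrating term by term, write `x/(1+x²t²) = Re (x/(1-ixt))`,
whose `m`-th derivative is `Re (x m! (ix)^m (1-ixt)^{-(m+1)})`. With `w = ixh/(1-ixt₀)` the inner
series becomes the imaginary part of `∑ ((-1)^m+1) w^{m+1}/(m+1) = log (1+w) - log (1-w)`, which
converges because `‖w‖ ≤ |x| h < 1`. Since `1 ± w = (1 - ix(t₀ ∓ h))/(1 - ixt₀)` and all these
factors lie in the right half-plane, the imaginary part is a difference of two arctangents.
-/

open Complex

namespace Complex

theorem hasSum_log_one_add_sub_log_one_sub {z : ℂ} (hz : ‖z‖ < 1) :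
    HasSum (fun m : ℕ => ((-1) ^ m + 1) * z ^ (m + 1) / (m + 1)) (log (1 + z) - log (1 - z)) := by
  have h := (hasSum_taylorSeries_log hz).add (hasSum_taylorSeries_neg_log hz)
  rw [← sub_eq_add_neg, ← hasSum_nat_add_iff' 1] at h
  simpa [pow_succ, add_mul, add_div] using h

theorem arg_mul_of_re_pos {z w : ℂ} (hz : 0 < z.re) (hw : 0 < w.re) :
    arg (z * w) = arg z + arg w := by
  have hz' := abs_lt.1 (abs_arg_lt_pi_div_two_iff.2 (Or.inl hz))
  have hw' := abs_lt.1 (abs_arg_lt_pi_div_two_iff.2 (Or.inl hw))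
  refine arg_mul (ne_zero_of_re_pos hz) (ne_zero_of_re_pos hw) ⟨?_, ?_⟩ <;> linarith

theorem arg_one_sub_I_mul (p : ℝ) : arg (1 - I * p) = -Real.arctan p := by
  have h := abs_lt.1 (abs_arg_lt_pi_div_two_iff.2 (Or.inl (by simp : 0 < (1 - I * p).re)))
  rw [← Real.arctan_tan h.1 h.2, tan_arg]
  simp [Real.arctan_neg]

theorem one_sub_I_mul_mul_ne_zero (x s : ℝ) : 1 - I * x * s ≠ 0 := fun h => by
  simpa using congrArg re h

end Complex

theorem hasDerivAt_inv_one_sub_mul_pow_succ (c : ℂ) (n : ℕ) {t : ℝ} (ht : 1 - c * t ≠ 0) :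
    HasDerivAt (fun s : ℝ => (1 - c * s)⁻¹ ^ (n + 1)) ((n + 1) * c * (1 - c * t)⁻¹ ^ (n + 2)) t := by
  have h : HasDerivAt (fun z : ℂ => (1 - c * z)⁻¹ ^ (n + 1))
      ((n + 1) * c * (1 - c * t)⁻¹ ^ (n + 2)) t := by
    refine ((((hasDerivAt_id' (t : ℂ)).const_mul c).const_sub 1).fun_inv ht).fun_pow (n + 1)
      |>.congr_deriv ?_
    simp only [Nat.add_sub_cancel, mul_one, neg_neg, Nat.cast_add, Nat.cast_one]
    rw [pow_add, inv_pow _ 2]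
    ring
  exact h.comp_ofReal

theorem iteratedDeriv_re_mul_inv_one_sub_mul (a c : ℂ) (hc : ∀ s : ℝ, 1 - c * s ≠ 0) (m : ℕ) :
    iteratedDeriv m (fun s : ℝ => (a * (1 - c * s)⁻¹).re) =
      fun t : ℝ => (a * m.factorial * c ^ m * (1 - c * t)⁻¹ ^ (m + 1)).re := by
  induction m with
  | zero => simp
  | succ m ih =>
    ext t
    rw [iteratedDeriv_succ, ih]
    have h : HasDerivAt (fun s : ℝ => (a * m.factorial * c ^ m * (1 - c * s)⁻¹ ^ (m + 1)).re)
        (a * m.factorial * c ^ m * ((m + 1) * c * (1 - c * t)⁻¹ ^ (m + 2))).re t :=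
      reCLM.hasFDerivAt.comp_hasDerivAt t
        ((hasDerivAt_inv_one_sub_mul_pow_succ c m (hc t)).const_mul _)
    rw [h.deriv, Nat.factorial_succ]
    push_cast
    ring_nf

theorem div_one_add_sq_mul_sq_eq_re (x t : ℝ) :
    x / (1 + x ^ 2 * t ^ 2) = (x * (1 - I * x * t)⁻¹ : ℂ).re := by
  rw [← div_eq_mul_inv, div_re]
  simp [normSq_apply]
  ring

theorem iteratedDeriv_div_one_add_sq_mul_sq (x : ℝ) (m : ℕ) (t : ℝ) :
    iteratedDeriv m (fun t : ℝ => x / (1 + x ^ 2 * t ^ 2)) t =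
      (x * m.factorial * (I * x) ^ m * (1 - I * x * t)⁻¹ ^ (m + 1)).re := by
  simp_rw [div_one_add_sq_mul_sq_eq_re]
  rw [iteratedDeriv_re_mul_inv_one_sub_mul _ _ (one_sub_I_mul_mul_ne_zero x)]

theorem hasSum_arctan_mul_sub_arctan_mul {x r : ℝ} (hr : |x| < r) (t : ℝ) :
    HasSum (fun m : ℕ => ((-1 : ℝ) ^ m + 1) / (r ^ (m + 1) * ((m + 1).factorial : ℝ)) *
        iteratedDeriv m (fun t : ℝ => x / (1 + x ^ 2 * t ^ 2)) t)
      (Real.arctan (x * (t + r⁻¹)) - Real.arctan (x * (t - r⁻¹))) := by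
  have hr0 : 0 < r := (abs_nonneg x).trans_lt hr
  have hrC : (r : ℂ) ≠ 0 := ofReal_ne_zero.2 hr0.ne'
  have hv := one_sub_I_mul_mul_ne_zero x t
  set u : ℂ := (1 - I * x * t)⁻¹ with hu_def
  set w : ℂ := I * x * u / r with hw_def
  have hu : 0 < u.re := by
    rw [hu_def, inv_re]
    exact div_pos (by simp) (normSq_pos.2 hv)
  have hu_norm : ‖u‖ ≤ 1 := by
    rw [hu_def, norm_inv]
    exact inv_le_one_of_one_le₀ (by simpa using abs_re_le_norm (1 - I * x * t))
  have hw : ‖w‖ < 1 :=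
    calc ‖w‖ = |x| / r * ‖u‖ := by
          simp [hw_def, abs_of_pos hr0]
          ring
      _ ≤ |x| / r := mul_le_of_le_one_right (by positivity) hu_norm
      _ < 1 := (div_lt_one hr0).2 hr
  have h_add : 1 + w = (1 - I * ↑(x * (t - r⁻¹))) * u := by
    rw [hw_def, hu_def]
    push_cast
    field_simp
    ring
  have h_sub : 1 - w = (1 - I * ↑(x * (t + r⁻¹))) * u := by
    rw [hw_def, hu_def]
    push_cast
    field_simp
    ring
  have h_im : (log (1 + w) - log (1 - w)).im =
      Real.arctan (x * (t + r⁻¹)) - Real.arctan (x * (t - r⁻¹)) := by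
    rw [sub_im, log_im, log_im, h_add, h_sub, arg_mul_of_re_pos (by simp) hu,
      arg_mul_of_re_pos (by simp) hu, arg_one_sub_I_mul, arg_one_sub_I_mul]
    ring
  rw [← h_im]
  convert hasSum_im (hasSum_log_one_add_sub_log_one_sub hw) using 2 with m
  rw [iteratedDeriv_div_one_add_sq_mul_sq, ← hu_def]
  have h_term : ((-1) ^ m + 1) * w ^ (m + 1) / (m + 1) =
      (((-1 : ℝ) ^ m + 1) / (r ^ (m + 1) * ((m + 1).factorial : ℝ)) : ℝ) *
        (I * (x * m.factorial * (I * x) ^ m * u ^ (m + 1))) := by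
    have hfac : (m.factorial : ℂ) ≠ 0 := Nat.cast_ne_zero.2 m.factorial_ne_zero
    rw [hw_def, Nat.factorial_succ, div_pow, mul_pow]
    push_cast
    field_simp
    ring
  rw [h_term, im_ofReal_mul, I_mul_im]

theorem Finset.sum_Icc_one_sub_natCast_sub_one {M : Type*} [AddCommGroup M] (g : ℝ → M)
    (n : ℕ) : ∑ ℓ ∈ Finset.Icc 1 n, (g ℓ - g (ℓ - 1)) = g n - g 0 := by
  induction n with
  | zero => simp
  | succ n ih =>
    rw [Finset.sum_Icc_succ_top (by omega), ih]
    push_cast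
    simp

theorem arctan_eq_double_series_general (L : ℕ) (x : ℝ) (hx : |x| < 2 * L) :
    (∀ ℓ ∈ Finset.Icc 1 L,
      Summable (fun m : ℕ =>
        (((-1 : ℝ) ^ m + 1) / ((2 * L : ℝ) ^ (m + 1) * ((m + 1).factorial : ℝ))) *
          iteratedDeriv m (fun t : ℝ => x / (1 + x ^ 2 * t ^ 2))
            ((2 * (ℓ : ℝ) - 1) / (2 * L)))) ∧
    Real.arctan x =
      ∑ ℓ ∈ Finset.Icc 1 L, ∑' m : ℕ,
        (((-1 : ℝ) ^ m + 1) / ((2 * L : ℝ) ^ (m + 1) * ((m + 1).factorial : ℝ))) *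
          iteratedDeriv m (fun t : ℝ => x / (1 + x ^ 2 * t ^ 2))
            ((2 * (ℓ : ℝ) - 1) / (2 * L)) := by
  have hL : (0 : ℝ) < L := by linarith [abs_nonneg x]
  have h_cell : ∀ ℓ : ℕ, HasSum (fun m : ℕ =>
      (((-1 : ℝ) ^ m + 1) / ((2 * L : ℝ) ^ (m + 1) * ((m + 1).factorial : ℝ))) *
        iteratedDeriv m (fun t : ℝ => x / (1 + x ^ 2 * t ^ 2)) ((2 * (ℓ : ℝ) - 1) / (2 * L)))
      (Real.arctan (x * (ℓ / L)) - Real.arctan (x * ((ℓ - 1) / L))) := by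
    intro ℓ
    convert hasSum_arctan_mul_sub_arctan_mul hx ((2 * ℓ - 1) / (2 * L)) using 3 <;>
      · field_simp
        ring
  refine ⟨fun ℓ _ => (h_cell ℓ).summable, ?_⟩
  rw [Finset.sum_congr rfl fun ℓ _ => (h_cell ℓ).tsum_eq,
    Finset.sum_Icc_one_sub_natCast_sub_one (fun s => Real.arctan (x * (s / L)))]
  simp [hL.ne']

theorem arctan_eq_double_series (L : ℕ) (hL : 0 < L) (x : ℝ) (hx : |x| < 2 * L) :
    (∀ ℓ ∈ Finset.Icc 1 L,
      Summable (fun m : ℕ =>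
        (((-1 : ℝ) ^ m + 1) / ((2 * L : ℝ) ^ (m + 1) * ((m + 1).factorial : ℝ))) *
          iteratedDeriv m (fun t : ℝ => x / (1 + x ^ 2 * t ^ 2))
            ((2 * (ℓ : ℝ) - 1) / (2 * L)))) ∧
    Real.arctan x =
      ∑ ℓ ∈ Finset.Icc 1 L, ∑' m : ℕ,
        (((-1 : ℝ) ^ m + 1) / ((2 * L : ℝ) ^ (m + 1) * ((m + 1).factorial : ℝ))) *
          iteratedDeriv m (fun t : ℝ => x / (1 + x ^ 2 * t ^ 2))
            ((2 * (ℓ : ℝ) - 1) / (2 * L)) :=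
  arctan_eq_double_series_general L x hx
end
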